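/- arXiv:math/0203235 — 5 statements merged into one kernel-verified Lean document; each statement's English description precedes it below -/
import Mathlib

section
/- Let I ⊆ R = K[X_1,…,X_n] be an ideal supported at the origin and > a monomial order. Then e(in_>(I)) ≥ e(I). -/
open Filter MvPolynomial
open scoped Pointwise

/-- An ideal of `K[X_1,…,X_n]` is supported at the origin if it contains a power
of the maximal ideal `(X_1,…,X_n)`. -/
def SupportedAtOrigin {K : Type*} [Field K] {n : ℕ}
    (a : Ideal (MvPolynomial (Fin n) K)) : Prop :=
  ∃ k : ℕ, (Ideal.span (Set.range (X : Fin n → MvPolynomial (Fin n) K))) ^ k ≤ a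

/-- The multiplicity `e(a) = limsup_k n!·dim_K(R/a^k)/k^n` of an ideal of
`K[X_1,…,X_n]` supported at the origin. -/
noncomputable def polyMult {K : Type*} [Field K] {n : ℕ}
    (a : Ideal (MvPolynomial (Fin n) K)) : ℝ :=
  limsup (fun k : ℕ =>
    (Nat.factorial n * Module.finrank K (MvPolynomial (Fin n) K ⧸ a ^ k) : ℝ) / (k : ℝ) ^ n) atTop

/-- The multiplicity `e(a_•) = limsup_m e(a_m)/m^n` of a sequence of ideals. -/
noncomputable def polyMultSeq {K : Type*} [Field K] {n : ℕ}
    (a : ℕ → Ideal (MvPolynomial (Fin n) K)) : ℝ :=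
  limsup (fun m : ℕ => polyMult (a m) / (m : ℝ) ^ n) atTop

/-- The volume `vol(a_•) = limsup_m n!·dim_K(R/a_m)/m^n` of a sequence of ideals. -/
noncomputable def polyVolSeq {K : Type*} [Field K] {n : ℕ}
    (a : ℕ → Ideal (MvPolynomial (Fin n) K)) : ℝ :=
  limsup (fun m : ℕ =>
    (Nat.factorial n * Module.finrank K (MvPolynomial (Fin n) K ⧸ a m) : ℝ) / (m : ℝ) ^ n) atTop

/-- A monomial ideal: an ideal generated by the monomials it contains. -/
def IsMonomialIdeal {K : Type*} [Field K] {n : ℕ}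
    (a : Ideal (MvPolynomial (Fin n) K)) : Prop :=
  a = Ideal.span ((fun v : Fin n →₀ ℕ => (monomial v (1 : K) : MvPolynomial (Fin n) K)) ''
        {v : Fin n →₀ ℕ | monomial v (1 : K) ∈ a})

/-- The Newton polyhedron of a (monomial) ideal: the convex hull in `ℝ^n` of the
exponents of the monomials lying in the ideal. -/
def newton {K : Type*} [Field K] {n : ℕ} (a : Ideal (MvPolynomial (Fin n) K)) :
    Set (Fin n → ℝ) :=
  convexHull ℝ ((fun v : Fin n →₀ ℕ => fun i => (v i : ℝ)) ''
    {v : Fin n →₀ ℕ | monomial v (1 : K) ∈ a})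

/-- The multiplier ideal `I(λ·a)` of a monomial ideal `a`: it is generated by the
monomials `X^u` with `u + e ∈ Int(λ·P_a)`, where `e = (1,…,1)`. -/
noncomputable def multiplierIdeal {K : Type*} [Field K] {n : ℕ} (lam : ℝ)
    (a : Ideal (MvPolynomial (Fin n) K)) : Ideal (MvPolynomial (Fin n) K) :=
  Ideal.span ((fun v : Fin n →₀ ℕ => (monomial v (1 : K) : MvPolynomial (Fin n) K)) ''
    {v : Fin n →₀ ℕ | (fun i => (v i : ℝ) + 1) ∈ interior (lam • newton a)})

/-- The asymptotic multiplier ideal `b_m = I(m·‖a_•‖)` of a graded sequence of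
monomial ideals: it is generated by the monomials `X^u` with
`u + e ∈ Int((m/p)·P_{a_p})` for some `p ≥ 1`. -/
noncomputable def asympMultiplierIdeal {K : Type*} [Field K] {n : ℕ}
    (a : ℕ → Ideal (MvPolynomial (Fin n) K)) (m : ℕ) : Ideal (MvPolynomial (Fin n) K) :=
  Ideal.span ((fun v : Fin n →₀ ℕ => (monomial v (1 : K) : MvPolynomial (Fin n) K)) ''
    {v : Fin n →₀ ℕ | ∃ p : ℕ, 1 ≤ p ∧
      (fun i => (v i : ℝ) + 1) ∈ interior (((m : ℝ) / (p : ℝ)) • newton (a p))})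

/-- The exponent of the leading monomial of `f` with respect to a monomial order. -/
noncomputable def leadExp {K : Type*} [Field K] {n : ℕ} (mo : MonomialOrder (Fin n))
    (f : MvPolynomial (Fin n) K) : Fin n →₀ ℕ :=
  mo.toSyn.symm (f.support.sup mo.toSyn)

/-- The initial ideal `in_>(a)`: the monomial ideal generated by the leading
monomials of the nonzero elements of `a`. -/
noncomputable def initialIdeal {K : Type*} [Field K] {n : ℕ} (mo : MonomialOrder (Fin n))
    (a : Ideal (MvPolynomial (Fin n) K)) : Ideal (MvPolynomial (Fin n) K) :=
  Ideal.span ((fun f : MvPolynomial (Fin n) K =>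
      (monomial (leadExp mo f) (1 : K) : MvPolynomial (Fin n) K)) ''
    {f : MvPolynomial (Fin n) K | f ∈ a ∧ f ≠ 0})


/-!
The monomials outside `in_>(J)` span `R/J`, by the division algorithm with respect to all
nonzero elements of `J`, and they stay linearly independent in `R/in_>(J)` because `in_>(J)` is
a monomial ideal; hence `dim R/J ≤ dim R/in_>(J)`. Leading exponents add under multiplication,
so `in_>(I)^k ⊆ in_>(I^k)` and therefore `dim R/I^k ≤ dim R/in_>(I)^k` for every `k`. Both
sequences are `O(k^n)` because `in_>(I)` contains a power of `(X_1,…,X_n)`, so their limsups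
compare.
-/

open Module Cardinal

theorem Ideal.rank_quotient_le_of_le {R A : Type*} [CommRing R] [CommRing A] [Algebra R A]
    {I J : Ideal A} (h : I ≤ J) : Module.rank R (A ⧸ J) ≤ Module.rank R (A ⧸ I) :=
  (Ideal.Quotient.factorₐ R h).toLinearMap.rank_le_of_surjective
    (Ideal.Quotient.factor_surjective h)

namespace MvPolynomial

theorem mk_mem_of_forall_mem_support {σ R : Type*} [CommRing R] {J : Ideal (MvPolynomial σ R)}
    {P : Submodule R (MvPolynomial σ R ⧸ J)} {f : MvPolynomial σ R}
    (h : ∀ v ∈ f.support, Ideal.Quotient.mk J (monomial v 1) ∈ P) :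
    Ideal.Quotient.mk J f ∈ P := by
  rw [f.as_sum, map_sum]
  refine Submodule.sum_mem _ fun v hv => ?_
  rw [← mul_one (coeff v f), ← smul_eq_mul, ← smul_monomial, ← Ideal.Quotient.mkₐ_eq_mk R,
    map_smul]
  exact P.smul_mem _ (h v hv)

theorem rank_quotient_le_of_pow_idealOfVars_le {K : Type*} [Field K] {n N : ℕ}
    {J : Ideal (MvPolynomial (Fin n) K)}
    (hJ : idealOfVars (Fin n) K ^ N ≤ J) :
    Module.rank K (MvPolynomial (Fin n) K ⧸ J) ≤ (N ^ n : ℕ) := by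
  classical
  let b : (Fin n → Fin N) → MvPolynomial (Fin n) K ⧸ J := fun e =>
    Ideal.Quotient.mk J (monomial (Finsupp.equivFunOnFinite.symm fun i => (e i : ℕ)) 1)
  let s := Finset.univ.image b
  have hspan : Submodule.span K (s : Set (MvPolynomial (Fin n) K ⧸ J)) = ⊤ := by
    refine eq_top_iff.2 fun x _ => ?_
    obtain ⟨f, rfl⟩ := Ideal.Quotient.mk_surjective x
    refine mk_mem_of_forall_mem_support fun v _ => ?_
    by_cases hv : N ≤ v.degree
    · rw [Ideal.Quotient.eq_zero_iff_mem.2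
        (hJ ((monomial_mem_pow_idealOfVars_iff _ _ one_ne_zero).2 hv))]
      exact zero_mem _
    · refine Submodule.subset_span (Finset.mem_coe.2 (Finset.mem_image.2
        ⟨fun i => ⟨v i, (v.le_degree i).trans_lt (not_le.1 hv)⟩, Finset.mem_univ _, ?_⟩))
      simp [b]
  calc Module.rank K (MvPolynomial (Fin n) K ⧸ J)
      = Module.rank K (Submodule.span K (s : Set (MvPolynomial (Fin n) K ⧸ J))) := by
        rw [hspan, rank_top]
    _ ≤ s.card := rank_span_finset_le _
    _ ≤ (N ^ n : ℕ) := by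
      exact_mod_cast Finset.card_image_le.trans (by simp)

end MvPolynomial

open MvPolynomial

section MonomialIdeal

variable {K : Type*} [Field K] {n : ℕ}

theorem IsMonomialIdeal.monomial_mem_of_mem_support {M : Ideal (MvPolynomial (Fin n) K)}
    (hM : IsMonomialIdeal M) {f : MvPolynomial (Fin n) K} (hf : f ∈ M)
    {v : Fin n →₀ ℕ} (hv : v ∈ f.support) : monomial v 1 ∈ M := by
  rw [hM, mem_ideal_span_monomial_image] at hf
  obtain ⟨s, hs, hsv⟩ := hf v hv
  exact Ideal.mem_of_dvd _ (monomial_dvd_monomial.2 ⟨Or.inr hsv, one_dvd _⟩) hs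

theorem IsMonomialIdeal.linearIndependent_mk_monomial {M : Ideal (MvPolynomial (Fin n) K)}
    (hM : IsMonomialIdeal M) :
    LinearIndependent K fun v : {v : Fin n →₀ ℕ // monomial v (1 : K) ∉ M} =>
      Ideal.Quotient.mk M (monomial v.1 1) := by
  rw [linearIndependent_iff']
  intro s c hc i hi
  set f := ∑ j ∈ s, c j • (monomial j.1 1 : MvPolynomial (Fin n) K)
  have hfM : f ∈ M := by
    rw [← Ideal.Quotient.eq_zero_iff_mem, ← hc, map_sum]
    simp_rw [← Ideal.Quotient.mkₐ_eq_mk K, map_smul]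
  have hcoeff : coeff i.1 f = c i := by
    simp [f, coeff_sum, coeff_monomial, Subtype.val_inj, hi]
  by_contra hci
  exact i.2 (hM.monomial_mem_of_mem_support hfM (mem_support_iff.2 (hcoeff ▸ hci)))

end MonomialIdeal

section InitialIdeal

variable {K : Type*} [Field K] {n : ℕ} (mo : MonomialOrder (Fin n))

theorem initialIdeal_eq_span_degree (a : Ideal (MvPolynomial (Fin n) K)) :
    initialIdeal mo a =
      Ideal.span ((monomial · 1) '' (mo.degree '' {f | f ∈ a ∧ f ≠ 0})) := by
  rw [initialIdeal, Set.image_image]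
  rfl -- `leadExp mo` unfolds to `mo.degree`

theorem monomial_mem_initialIdeal_iff {a : Ideal (MvPolynomial (Fin n) K)} {v : Fin n →₀ ℕ} :
    monomial v 1 ∈ initialIdeal mo a ↔ ∃ f ∈ a, f ≠ 0 ∧ mo.degree f ≤ v := by
  classical
  rw [initialIdeal_eq_span_degree, mem_ideal_span_monomial_image, support_monomial,
    if_neg one_ne_zero]
  simp [and_assoc]

theorem monomial_mem_initialIdeal {a : Ideal (MvPolynomial (Fin n) K)} {v : Fin n →₀ ℕ}
    (h : monomial v 1 ∈ a) : monomial v 1 ∈ initialIdeal mo a := by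
  classical
  exact (monomial_mem_initialIdeal_iff mo).2
    ⟨_, h, by simp, by rw [MonomialOrder.degree_monomial, if_neg one_ne_zero]⟩

theorem isMonomialIdeal_initialIdeal (a : Ideal (MvPolynomial (Fin n) K)) :
    IsMonomialIdeal (initialIdeal mo a) := by
  refine le_antisymm ?_ (Ideal.span_le.2 ?_)
  · rw [initialIdeal, Ideal.span_le]
    rintro _ ⟨f, hf, rfl⟩
    exact Ideal.subset_span ⟨_, Ideal.subset_span ⟨f, hf, rfl⟩, rfl⟩
  · rintro _ ⟨v, hv, rfl⟩
    exact hv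

theorem pow_idealOfVars_le_initialIdeal {a : Ideal (MvPolynomial (Fin n) K)} {N : ℕ}
    (h : idealOfVars (Fin n) K ^ N ≤ a) : idealOfVars (Fin n) K ^ N ≤ initialIdeal mo a := by
  rw [pow_idealOfVars_eq_span, Ideal.span_le] at h ⊢
  rintro _ ⟨v, hv, rfl⟩
  exact monomial_mem_initialIdeal mo (h ⟨v, hv, rfl⟩)

theorem initialIdeal_mul_le (a b : Ideal (MvPolynomial (Fin n) K)) :
    initialIdeal mo a * initialIdeal mo b ≤ initialIdeal mo (a * b) := by
  rw [initialIdeal_eq_span_degree, initialIdeal_eq_span_degree, Ideal.span_mul_span',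
    Ideal.span_le]
  rintro _ ⟨_, ⟨_, ⟨f, ⟨hfa, hf0⟩, rfl⟩, rfl⟩, _, ⟨_, ⟨g, ⟨hgb, hg0⟩, rfl⟩, rfl⟩, rfl⟩
  dsimp only
  rw [monomial_mul, one_mul]
  exact (monomial_mem_initialIdeal_iff mo).2 ⟨f * g, Ideal.mul_mem_mul hfa hgb,
    mul_ne_zero hf0 hg0, (MonomialOrder.degree_mul hf0 hg0).le⟩

theorem initialIdeal_top : initialIdeal mo (⊤ : Ideal (MvPolynomial (Fin n) K)) = ⊤ :=
  (Ideal.eq_top_iff_one _).2 (monomial_mem_initialIdeal mo (v := 0) Submodule.mem_top)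

theorem initialIdeal_pow_le (a : Ideal (MvPolynomial (Fin n) K)) (k : ℕ) :
    initialIdeal mo a ^ k ≤ initialIdeal mo (a ^ k) := by
  induction k with
  | zero => simp [initialIdeal_top]
  | succ k ih =>
    rw [pow_succ, pow_succ]
    exact (Ideal.mul_mono_left ih).trans (initialIdeal_mul_le mo _ _)

/-- Dividing `f` by all nonzero elements of `J` leaves a remainder supported on monomials
outside `in_>(J)`. -/
theorem mk_mem_span_standardMonomials (J : Ideal (MvPolynomial (Fin n) K))
    (f : MvPolynomial (Fin n) K) :
    Ideal.Quotient.mk J f ∈ Submodule.span K ((fun v => Ideal.Quotient.mk J (monomial v 1)) ''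
      {v | monomial v (1 : K) ∉ initialIdeal mo J}) := by
  obtain ⟨g, r, hfr, -, hr⟩ := mo.div_set (B := {f | f ∈ J ∧ f ≠ 0})
    (fun b hb => (MonomialOrder.leadingCoeff_ne_zero_iff.2 hb.2).isUnit) f
  have hfr' : Ideal.Quotient.mk J f = Ideal.Quotient.mk J r := by
    rw [Ideal.Quotient.eq, hfr, add_sub_cancel_right]
    exact Ideal.span_le.2 (fun b hb => hb.1)
      ((Finsupp.mem_span_iff_linearCombination _ _ _).2 ⟨g, rfl⟩)
  rw [hfr']
  refine mk_mem_of_forall_mem_support fun v hv => Submodule.subset_span ⟨v, fun hmem => ?_, rfl⟩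
  obtain ⟨b, hbJ, hb0, hle⟩ := (monomial_mem_initialIdeal_iff mo).1 hmem
  exact hr v hv b ⟨hbJ, hb0⟩ hle

theorem rank_quotient_le_rank_quotient_initialIdeal (J : Ideal (MvPolynomial (Fin n) K)) :
    Module.rank K (MvPolynomial (Fin n) K ⧸ J) ≤
      Module.rank K (MvPolynomial (Fin n) K ⧸ initialIdeal mo J) := by
  set S := {v | monomial v (1 : K) ∉ initialIdeal mo J}
  have hspan : Submodule.span K ((fun v => Ideal.Quotient.mk J (monomial v 1)) '' S) = ⊤ :=
    eq_top_iff.2 fun x _ => by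
      obtain ⟨f, rfl⟩ := Ideal.Quotient.mk_surjective x
      exact mk_mem_span_standardMonomials mo J f
  rw [← Cardinal.lift_le.{0}]
  calc Cardinal.lift (Module.rank K (MvPolynomial (Fin n) K ⧸ J))
      = Cardinal.lift (Module.rank K
          (Submodule.span K ((fun v => Ideal.Quotient.mk J (monomial v 1)) '' S))) := by
        rw [hspan, rank_top]
    _ ≤ Cardinal.lift #((fun v => Ideal.Quotient.mk J (monomial v 1)) '' S) :=
        Cardinal.lift_le.2 (rank_span_le _)
    _ ≤ Cardinal.lift #S := mk_image_le_lift
    _ ≤ Cardinal.lift (Module.rank K (MvPolynomial (Fin n) K ⧸ initialIdeal mo J)) :=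
      (isMonomialIdeal_initialIdeal mo J).linearIndependent_mk_monomial.cardinal_lift_le_rank

end InitialIdeal

theorem polyMult_le_polyMult_of_rank_le {K : Type*} [Field K] {n N : ℕ}
    {a b : Ideal (MvPolynomial (Fin n) K)} (hb : idealOfVars (Fin n) K ^ N ≤ b)
    (h : ∀ k, Module.rank K (MvPolynomial (Fin n) K ⧸ a ^ k) ≤
      Module.rank K (MvPolynomial (Fin n) K ⧸ b ^ k)) :
    polyMult a ≤ polyMult b := by
  have hbound : ∀ k, Module.rank K (MvPolynomial (Fin n) K ⧸ b ^ k) ≤ ((N * k) ^ n : ℕ) :=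
    fun k => rank_quotient_le_of_pow_idealOfVars_le
      (by rw [pow_mul]; exact Ideal.pow_right_mono hb k)
  have hfin : ∀ k, finrank K (MvPolynomial (Fin n) K ⧸ a ^ k) ≤
      finrank K (MvPolynomial (Fin n) K ⧸ b ^ k) := fun k =>
    finrank_le_finrank_of_rank_le_rank (by simpa using h k)
      ((hbound k).trans_lt natCast_lt_aleph0)
  refine limsup_le_limsup (Eventually.of_forall fun k => by dsimp only; gcongr; exact hfin k)
    (isBoundedUnder_of ⟨0, fun k => by positivity⟩).isCoboundedUnder_le
    (isBoundedUnder_of_eventually_le (a := (n.factorial * N ^ n : ℝ)) ?_)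
  filter_upwards [eventually_ge_atTop 1] with k hk
  have hk' : (0 : ℝ) < (k : ℝ) ^ n := by positivity
  rw [div_le_iff₀ hk']
  have hbk := finrank_le_of_rank_le (hbound k)
  calc (n.factorial * finrank K (MvPolynomial (Fin n) K ⧸ b ^ k) : ℝ)
      ≤ n.factorial * ((N * k) ^ n : ℕ) := by gcongr
    _ = n.factorial * N ^ n * (k : ℝ) ^ n := by push_cast; ring

theorem polyMult_le_polyMult_initialIdeal_general
    {K : Type*} [Field K] {n : ℕ}
    (mo : MonomialOrder (Fin n))
    (I : Ideal (MvPolynomial (Fin n) K))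
    (hsupp : SupportedAtOrigin I) :
    polyMult I ≤ polyMult (initialIdeal mo I) := by
  obtain ⟨N, hN⟩ := hsupp
  refine polyMult_le_polyMult_of_rank_le (pow_idealOfVars_le_initialIdeal mo hN) fun k => ?_
  calc Module.rank K (MvPolynomial (Fin n) K ⧸ I ^ k)
      ≤ Module.rank K (MvPolynomial (Fin n) K ⧸ initialIdeal mo (I ^ k)) :=
        rank_quotient_le_rank_quotient_initialIdeal mo _
    _ ≤ Module.rank K (MvPolynomial (Fin n) K ⧸ initialIdeal mo I ^ k) :=
        Ideal.rank_quotient_le_of_le (initialIdeal_pow_le mo I k)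

/-- For an ideal `I ⊆ K[X_1,…,X_n]` supported at the origin and a monomial
order `>`, one has `e(in_>(I)) ≥ e(I)`. -/
theorem polyMult_le_polyMult_initialIdeal
    {K : Type*} [Field K] {n : ℕ} (hn : 1 ≤ n)
    (mo : MonomialOrder (Fin n))
    (I : Ideal (MvPolynomial (Fin n) K))
    (hsupp : SupportedAtOrigin I) :
    polyMult I ≤ polyMult (initialIdeal mo I) :=
  polyMult_le_polyMult_initialIdeal_general mo I hsupp
end

section
/- Let a_• be a graded sequence of zero-dimensional ideals in R and let b_• be a reverse-graded sequence of zero-dimensional ideals dominating a_•. Then e(b_•) ≤ vol(b_•) ≤ vol(a_•) ≤ e(a_•). -/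
/-!
Everything is controlled by `𝔪`-adic bounds. If `𝔪 = (x₁, …, xₙ)`, then
`(J + xᵏ) / (J + xᵏ⁺¹)` is cyclic and killed by `J + x`, so `ℓ(R / (J + xᵏ)) ≤ k ℓ(R / (J + x))`;
iterating over the generators gives `ℓ(R / 𝔪ᵏ) ≤ ℓ(R / (x₁ᵏ, …, xₙᵏ)) ≤ kⁿ`. Since `𝔪ᴺ ⊆ a₁`,
also `𝔪ᴺᵏ ⊆ aₖ ⊆ bₖ`, so every ideal in sight has finite colength and every normalized colength
sequence is bounded, which makes the real `limsup`s behave.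

Then `vol(b) ≤ vol(a)` termwise; `e(bₘ) ≤ mⁿ vol(b)` because `bₘₖ ⊆ bₘᵏ`; and
`vol(a) ≤ e(aₘ) / mⁿ` because `aₘ^(⌊(j - 1) / m⌋ + c) ⊆ aⱼ` for a constant `c` as soon as
`aₘ ⊆ 𝔪`, while if `aₘ = R` the colengths of the `aⱼ` stay bounded and `vol(a) = 0`.
-/

open Filter IsLocalRing

/-- The length of the `R`-module `R ⧸ I` (the longest chain of submodules),
as a natural number. -/
noncomputable def colength (R : Type*) [CommRing R] (I : Ideal R) : ℕ :=
  ((Order.krullDim (Submodule R (R ⧸ I))).unbotD 0).toNat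

/-- The multiplicity `e(I) = limsup_k n!·length(R/I^k)/k^n` of a zero-dimensional
ideal `I` in an `n`-dimensional ring. -/
noncomputable def mult (R : Type*) [CommRing R] (n : ℕ) (I : Ideal R) : ℝ :=
  limsup (fun k : ℕ => (Nat.factorial n * colength R (I ^ k) : ℝ) / (k : ℝ) ^ n) atTop

/-- The volume `vol(a_•) = limsup_m n!·length(R/a_m)/m^n` of a graded sequence. -/
noncomputable def volSeq (R : Type*) [CommRing R] (n : ℕ) (a : ℕ → Ideal R) : ℝ :=
  limsup (fun m : ℕ => (Nat.factorial n * colength R (a m) : ℝ) / (m : ℝ) ^ n) atTop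

/-- The multiplicity `e(a_•) = limsup_m e(a_m)/m^n` of a graded sequence. -/
noncomputable def multSeq (R : Type*) [CommRing R] (n : ℕ) (a : ℕ → Ideal R) : ℝ :=
  limsup (fun m : ℕ => mult R n (a m) / (m : ℝ) ^ n) atTop

open Topology

section Length

variable {R M : Type*} [CommRing R] [AddCommGroup M] [Module R M]

theorem Module.length_eq_length_submodule_add_length_quotient (N : Submodule R M) :
    Module.length R M = Module.length R N + Module.length R (M ⧸ N) :=
  Module.length_eq_add_of_exact N.subtype N.mkQ N.injective_subtype N.mkQ_surjective
    (LinearMap.exact_subtype_mkQ N)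

theorem Module.length_span_singleton_le {I : Ideal R} {x : M} (hI : ∀ r ∈ I, r • x = 0) :
    Module.length R (R ∙ x) ≤ Module.length R (R ⧸ I) := by
  set f := (LinearMap.toSpanSingleton R M x).rangeRestrict
  have hker : I ≤ LinearMap.ker f := by
    rw [LinearMap.ker_rangeRestrict]; exact hI
  rw [LinearMap.span_singleton_eq_range]
  refine Module.length_le_of_surjective (I.liftQ f hker) ?_
  rw [← LinearMap.range_eq_top, Submodule.range_liftQ, LinearMap.range_rangeRestrict]

theorem Ideal.length_quotient_le_of_le {I J : Ideal R} (h : I ≤ J) :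
    Module.length R (R ⧸ J) ≤ Module.length R (R ⧸ I) :=
  Module.length_le_of_surjective _ (Submodule.factor_surjective h)

/-- From `0 → R ∙ y → R ⧸ S → R ⧸ (S ⊔ R ∙ y) → 0`, where `R ∙ y` is killed by `I`. -/
theorem Ideal.length_quotient_le_add_of_mul_span_singleton_le {S I : Ideal R} {y : R}
    (h : I * Ideal.span {y} ≤ S) :
    Module.length R (R ⧸ S) ≤
      Module.length R (R ⧸ I) + Module.length R (R ⧸ (S ⊔ Ideal.span {y})) := by
  have hmap : Submodule.map S.mkQ (S ⊔ Ideal.span {y}) = R ∙ S.mkQ y := by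
    rw [Submodule.map_sup, Submodule.mkQ_map_self, bot_sup_eq, Ideal.span, Submodule.map_span,
      Set.image_singleton]
  rw [Module.length_eq_length_submodule_add_length_quotient
      (Submodule.map S.mkQ (S ⊔ Ideal.span {y})),
    (Submodule.quotientQuotientEquivQuotient S _ le_sup_left).length_eq, hmap]
  gcongr
  refine Module.length_span_singleton_le fun r hr => ?_
  rw [← map_smul, Submodule.mkQ_apply, Submodule.Quotient.mk_eq_zero]
  exact h (Ideal.mul_mem_mul hr (Ideal.mem_span_singleton_self y))

theorem Ideal.length_quotient_sup_span_pow_le (J : Ideal R) (x : R) (k : ℕ) :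
    Module.length R (R ⧸ (J ⊔ Ideal.span {x ^ k})) ≤
      k * Module.length R (R ⧸ (J ⊔ Ideal.span {x})) := by
  induction k with
  | zero =>
    have : Subsingleton (R ⧸ (J ⊔ Ideal.span {x ^ 0})) := by
      rw [pow_zero, Ideal.span_singleton_one, sup_top_eq]; infer_instance
    simp [Module.length_eq_zero]
  | succ k ih =>
    have hmul : (J ⊔ Ideal.span {x}) * Ideal.span {x ^ k} ≤ J ⊔ Ideal.span {x ^ (k + 1)} := by
      rw [Ideal.sup_mul, Ideal.span_singleton_mul_span_singleton, ← pow_succ']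
      exact sup_le_sup_right Ideal.mul_le_left _
    have hsup : J ⊔ Ideal.span {x ^ (k + 1)} ⊔ Ideal.span {x ^ k} = J ⊔ Ideal.span {x ^ k} := by
      rw [sup_assoc, sup_eq_right.mpr (Ideal.span_singleton_le_span_singleton.mpr
        (pow_dvd_pow x k.le_succ))]
    calc Module.length R (R ⧸ (J ⊔ Ideal.span {x ^ (k + 1)}))
        ≤ Module.length R (R ⧸ (J ⊔ Ideal.span {x})) +
            Module.length R (R ⧸ (J ⊔ Ideal.span {x ^ k})) := by
          rw [← hsup]; exact Ideal.length_quotient_le_add_of_mul_span_singleton_le hmul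
      _ ≤ Module.length R (R ⧸ (J ⊔ Ideal.span {x})) +
            k * Module.length R (R ⧸ (J ⊔ Ideal.span {x})) := by
          gcongr
      _ = (k + 1 : ℕ) * Module.length R (R ⧸ (J ⊔ Ideal.span {x})) := by
          push_cast; ring

theorem Ideal.length_quotient_sup_span_image_pow_le (k : ℕ) (s : Finset R) (J : Ideal R) :
    Module.length R (R ⧸ (J ⊔ Ideal.span ((· ^ k) '' s))) ≤
      k ^ s.card * Module.length R (R ⧸ (J ⊔ Ideal.span s)) := by
  classical
  induction s using Finset.induction_on generalizing J with
  | empty =>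
    rw [Finset.coe_empty, Set.image_empty, Ideal.span_empty, sup_bot_eq, Finset.card_empty,
      pow_zero, one_mul]
  | insert x t hx ih =>
    have hk : J ⊔ Ideal.span ((· ^ k) '' ↑(insert x t)) =
        (J ⊔ Ideal.span ((· ^ k) '' ↑t)) ⊔ Ideal.span {x ^ k} := by
      rw [Finset.coe_insert, Set.image_insert_eq, Ideal.span_insert]; ac_rfl
    have h1 : J ⊔ Ideal.span ((· ^ k) '' ↑t) ⊔ Ideal.span {x} =
        (J ⊔ Ideal.span {x}) ⊔ Ideal.span ((· ^ k) '' ↑t) := by ac_rfl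
    have h2 : (J ⊔ Ideal.span {x}) ⊔ Ideal.span ↑t = J ⊔ Ideal.span ↑(insert x t) := by
      rw [Finset.coe_insert, Ideal.span_insert]; ac_rfl
    calc Module.length R (R ⧸ (J ⊔ Ideal.span ((· ^ k) '' ↑(insert x t))))
        ≤ k * Module.length R (R ⧸ ((J ⊔ Ideal.span {x}) ⊔ Ideal.span ((· ^ k) '' ↑t))) := by
          rw [hk, ← h1]; exact Ideal.length_quotient_sup_span_pow_le _ x k
      _ ≤ k * (k ^ t.card * Module.length R (R ⧸ (J ⊔ Ideal.span ↑(insert x t)))) := by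
          rw [← h2]; gcongr; exact ih _
      _ = k ^ (insert x t).card * Module.length R (R ⧸ (J ⊔ Ideal.span ↑(insert x t))) := by
          rw [Finset.card_insert_of_notMem hx]; ring

theorem Ideal.length_quotient_span_pow_le (s : Finset R) (k : ℕ) :
    Module.length R (R ⧸ Ideal.span (s : Set R) ^ k) ≤
      k ^ s.card * Module.length R (R ⧸ Ideal.span (s : Set R)) := by
  have hle : Ideal.span ((· ^ k) '' s) ≤ Ideal.span (s : Set R) ^ k :=
    Ideal.span_le.mpr <| Set.image_subset_iff.mpr fun x hx =>
      Ideal.pow_mem_pow (Ideal.subset_span hx) k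
  have := Ideal.length_quotient_sup_span_image_pow_le k s ⊥
  rw [bot_sup_eq, bot_sup_eq] at this
  exact (Ideal.length_quotient_le_of_le hle).trans this

theorem IsLocalRing.length_quotient_maximalIdeal_pow_le [IsLocalRing R] {s : Finset R}
    (hs : Ideal.span (s : Set R) = maximalIdeal R) (k : ℕ) :
    Module.length R (R ⧸ maximalIdeal R ^ k) ≤ (k ^ s.card : ℕ) := by
  have : IsSimpleModule R (R ⧸ maximalIdeal R) :=
    isSimpleModule_iff_isCoatom.mpr (Ideal.isMaximal_def.mp inferInstance)
  have := Ideal.length_quotient_span_pow_le s k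
  rwa [hs, Module.length_eq_one R (R ⧸ maximalIdeal R), mul_one, ← Nat.cast_pow] at this

theorem IsLocalRing.exists_maximalIdeal_pow_le_of_isFiniteLength [IsLocalRing R] {I : Ideal R}
    (h : IsFiniteLength R (R ⧸ I)) :
    ∃ N, maximalIdeal R ^ N ≤ I := by
  have : IsArtinian R (R ⧸ I) := (isFiniteLength_iff_isNoetherian_isArtinian.mp h).2
  have : IsArtinianRing (R ⧸ I) := isArtinian_of_tower R this
  exact exists_maximalIdeal_pow_le_of_isArtinianRing_quotient I

end Length

theorem Real.limsup_nonneg {α : Type*} {f : Filter α} [f.NeBot] {u : α → ℝ}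
    (hu : ∀ x, 0 ≤ u x) : 0 ≤ limsup u f :=
  Real.sInf_nonneg fun _ hb => let ⟨_, hx⟩ := Filter.Eventually.exists hb; (hu _).trans hx

theorem limsup_le_limsup_mul_of_le_comp_mul {f g h : ℕ → ℝ} {φ : ℕ → ℕ} {ρ : ℝ}
    (hf : ∀ j, 0 ≤ f j) (hg : ∀ k, 0 ≤ g k) (hg_bdd : IsBoundedUnder (· ≤ ·) atTop g)
    (hh : ∀ j, 0 ≤ h j) (hφ : Tendsto φ atTop atTop) (hhρ : Tendsto h atTop (𝓝 ρ))
    (hfg : ∀ᶠ j in atTop, f j ≤ g (φ j) * h j) :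
    limsup f atTop ≤ limsup g atTop * ρ := by
  have hgφ_bdd : IsBoundedUnder (· ≤ ·) atTop (g ∘ φ) := hφ.isBoundedUnder_comp hg_bdd
  have hρ : 0 ≤ ρ := ge_of_tendsto' hhρ hh
  calc limsup f atTop ≤ limsup (g ∘ φ * h) atTop :=
        limsup_le_limsup hfg (isCoboundedUnder_le_of_le atTop hf)
          (isBoundedUnder_le_mul_of_nonneg (.of_forall fun _ => hg _) hgφ_bdd
            (.of_forall hh) hhρ.isBoundedUnder_le)
    _ ≤ limsup (g ∘ φ) atTop * limsup h atTop :=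
        limsup_mul_le (.of_forall fun _ => hg _) hgφ_bdd (.of_forall hh) hhρ.isBoundedUnder_le
    _ ≤ limsup g atTop * ρ := by
        rw [hhρ.limsup_eq]
        gcongr
        exact hφ.limsup_comp_le_limsup (isCoboundedUnder_le_of_le _ fun _ => hg _) hg_bdd

section Graded

variable {R : Type*} [CommSemiring R]

theorem pow_mul_le_of_graded {a : ℕ → Ideal R} (ha : ∀ p q, a p * a q ≤ a (p + q))
    (m k r : ℕ) : a m ^ k * a r ≤ a (m * k + r) := by
  induction k with
  | zero => simp
  | succ k ih =>
    calc a m ^ (k + 1) * a r = a m * (a m ^ k * a r) := by rw [pow_succ', mul_assoc]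
      _ ≤ a m * a (m * k + r) := Ideal.mul_mono_right ih
      _ ≤ a (m + (m * k + r)) := ha _ _
      _ = a (m * (k + 1) + r) := by ring_nf

theorem pow_le_of_graded {a : ℕ → Ideal R} (ha : ∀ p q, a p * a q ≤ a (p + q))
    (m : ℕ) {k : ℕ} (hk : 1 ≤ k) : a m ^ k ≤ a (m * k) := by
  obtain ⟨k, rfl⟩ := Nat.exists_eq_add_of_le' hk
  simpa [pow_succ, mul_add] using pow_mul_le_of_graded ha m k m

/-- Write `j = m * q + r` with `q = (j - 1) / m` and `1 ≤ r ≤ m`. -/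
theorem pow_mul_pow_le_of_graded {a : ℕ → Ideal R} (ha : ∀ p q, a p * a q ≤ a (p + q))
    {M : Ideal R} {N : ℕ} (hN : ∀ r, 1 ≤ r → M ^ (N * r) ≤ a r) {m j : ℕ} (hm : 1 ≤ m)
    (hj : 1 ≤ j) : a m ^ ((j - 1) / m) * M ^ (N * m) ≤ a j := by
  have hr : (j - 1) % m < m := Nat.mod_lt _ hm
  have hj_eq : j = m * ((j - 1) / m) + ((j - 1) % m + 1) := by
    have := Nat.div_add_mod (j - 1) m; omega
  calc a m ^ ((j - 1) / m) * M ^ (N * m)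
      ≤ a m ^ ((j - 1) / m) * a ((j - 1) % m + 1) := by
        gcongr
        exact (Ideal.pow_le_pow_right (Nat.mul_le_mul_left N hr)).trans (hN _ (by omega))
    _ ≤ a j := (pow_mul_le_of_graded ha _ _ _).trans_eq (congrArg a hj_eq.symm)

theorem le_pow_of_reverseGraded {b : ℕ → Ideal R}
    (hb : ∀ p q, 1 ≤ p → 1 ≤ q → b (p + q) ≤ b p * b q) {m : ℕ} (hm : 1 ≤ m) {k : ℕ}
    (hk : 1 ≤ k) : b (m * k) ≤ b m ^ k := by
  induction k, hk using Nat.le_induction with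
  | base => simp
  | succ k hk ih =>
    calc b (m * (k + 1)) = b (m * k + m) := by ring_nf
      _ ≤ b (m * k) * b m := hb _ _ (Nat.mul_pos hm hk) hm
      _ ≤ b m ^ k * b m := Ideal.mul_mono_left ih
      _ = b m ^ (k + 1) := (pow_succ _ _).symm

end Graded

noncomputable def normColength (R : Type*) [CommRing R] (n : ℕ) (c : ℕ → Ideal R) (k : ℕ) : ℝ :=
  (Nat.factorial n * colength R (c k) : ℝ) / (k : ℝ) ^ n

section Colength

variable {R : Type*} [CommRing R]

theorem colength_eq_toNat_length (I : Ideal R) :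
    colength R I = (Module.length R (R ⧸ I)).toNat := by
  rw [colength, ← Module.coe_length, WithBot.unbotD_coe]

theorem colength_le_of_length_le {I : Ideal R} {c : ℕ} (h : Module.length R (R ⧸ I) ≤ c) :
    colength R I ≤ c :=
  colength_eq_toNat_length I ▸ ENat.toNat_le_of_le_natCast h

theorem colength_le_colength_of_le {I J : Ideal R} (hIJ : I ≤ J)
    (hI : Module.length R (R ⧸ I) ≠ ⊤) :
    colength R J ≤ colength R I := by
  simpa only [colength_eq_toNat_length] using
    ENat.toNat_le_toNat (Ideal.length_quotient_le_of_le hIJ) hI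

variable {n : ℕ}

theorem volSeq_eq_limsup (c : ℕ → Ideal R) :
    volSeq R n c = limsup (normColength R n c) atTop := rfl

theorem mult_eq_volSeq (I : Ideal R) : mult R n I = volSeq R n (I ^ ·) := rfl

theorem normColength_nonneg (c : ℕ → Ideal R) (k : ℕ) : 0 ≤ normColength R n c k := by
  unfold normColength; positivity

theorem volSeq_nonneg (c : ℕ → Ideal R) : 0 ≤ volSeq R n c :=
  Real.limsup_nonneg (normColength_nonneg c)

theorem normColength_le_mul_div_pow {c d : ℕ → Ideal R} {j k : ℕ} (hk : k ≠ 0)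
    (h : colength R (c j) ≤ colength R (d k)) :
    normColength R n c j ≤ normColength R n d k * ((k : ℝ) / j) ^ n := by
  calc normColength R n c j ≤ (Nat.factorial n * colength R (d k) : ℝ) / (j : ℝ) ^ n := by
        unfold normColength; gcongr
    _ = normColength R n d k * ((k : ℝ) / j) ^ n := by
        unfold normColength; rw [div_pow]; field_simp

end Colength

section MaximalIdealAdic

variable {R : Type*} [CommRing R] [IsLocalRing R] {n : ℕ}
  (hR : ∀ k, Module.length R (R ⧸ maximalIdeal R ^ k) ≤ (k ^ n : ℕ))
include hR

theorem colength_le_of_maximalIdeal_pow_le {I : Ideal R} {N : ℕ} (h : maximalIdeal R ^ N ≤ I) :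
    colength R I ≤ N ^ n :=
  colength_le_of_length_le ((Ideal.length_quotient_le_of_le h).trans (hR N))

theorem colength_le_colength_of_maximalIdeal_pow_le {I J : Ideal R} {N : ℕ}
    (h : maximalIdeal R ^ N ≤ I) (hIJ : I ≤ J) : colength R J ≤ colength R I :=
  colength_le_colength_of_le hIJ (ne_top_of_le_ne_top (ENat.natCast_ne_top _)
    ((Ideal.length_quotient_le_of_le h).trans (hR N)))

theorem normColength_le_of_maximalIdeal_pow_le {c : ℕ → Ideal R} {N k : ℕ}
    (h : maximalIdeal R ^ (N * k) ≤ c k) :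
    normColength R n c k ≤ Nat.factorial n * (N : ℝ) ^ n := by
  have hc : (colength R (c k) : ℝ) ≤ (N : ℝ) ^ n * (k : ℝ) ^ n := by
    rw [← mul_pow]; exact_mod_cast colength_le_of_maximalIdeal_pow_le hR h
  calc normColength R n c k ≤ Nat.factorial n * ((N : ℝ) ^ n * (k : ℝ) ^ n) / (k : ℝ) ^ n := by
        unfold normColength; gcongr
    _ = Nat.factorial n * (N : ℝ) ^ n * ((k : ℝ) ^ n / (k : ℝ) ^ n) := by ring
    _ ≤ Nat.factorial n * (N : ℝ) ^ n := mul_le_of_le_one_right (by positivity) (div_self_le_one _)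

theorem isBoundedUnder_normColength {c : ℕ → Ideal R} {N : ℕ}
    (h : ∀ᶠ k in atTop, maximalIdeal R ^ (N * k) ≤ c k) :
    IsBoundedUnder (· ≤ ·) atTop (normColength R n c) :=
  isBoundedUnder_of_eventually_le (h.mono fun _ => normColength_le_of_maximalIdeal_pow_le hR)

theorem volSeq_le_of_maximalIdeal_pow_le {c : ℕ → Ideal R} {N : ℕ}
    (h : ∀ᶠ k in atTop, maximalIdeal R ^ (N * k) ≤ c k) :
    volSeq R n c ≤ Nat.factorial n * (N : ℝ) ^ n :=
  limsup_le_of_le (isCoboundedUnder_le_of_le atTop (normColength_nonneg c))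
    (h.mono fun _ => normColength_le_of_maximalIdeal_pow_le hR)

theorem volSeq_nonpos_of_maximalIdeal_pow_le (hn : 1 ≤ n) {c : ℕ → Ideal R} {N : ℕ}
    (h : ∀ᶠ k in atTop, maximalIdeal R ^ N ≤ c k) :
    volSeq R n c ≤ 0 := by
  have hlim : Tendsto (fun k : ℕ => (Nat.factorial n * N ^ n : ℝ) / (k : ℝ) ^ n) atTop (𝓝 0) :=
    tendsto_const_nhds.div_atTop
      ((tendsto_pow_atTop (by omega)).comp tendsto_natCast_atTop_atTop)
  rw [volSeq_eq_limsup, ← hlim.limsup_eq]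
  refine limsup_le_limsup (h.mono fun k hk => ?_)
    (isCoboundedUnder_le_of_le atTop (normColength_nonneg c)) hlim.isBoundedUnder_le
  dsimp only
  unfold normColength
  gcongr
  exact_mod_cast colength_le_of_maximalIdeal_pow_le hR hk

theorem volSeq_le_volSeq_of_le {c d : ℕ → Ideal R} {N : ℕ}
    (hc : ∀ k, 1 ≤ k → maximalIdeal R ^ (N * k) ≤ c k)
    (hcd : ∀ k, 1 ≤ k → c k ≤ d k) : volSeq R n d ≤ volSeq R n c := by
  have hc' : ∀ᶠ k in atTop, maximalIdeal R ^ (N * k) ≤ c k := eventually_atTop.mpr ⟨1, hc⟩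
  rw [volSeq_eq_limsup, volSeq_eq_limsup]
  refine limsup_le_limsup (eventually_atTop.mpr ⟨1, fun k hk => ?_⟩)
    (isCoboundedUnder_le_of_le atTop (normColength_nonneg d))
    (isBoundedUnder_normColength hR hc')
  unfold normColength
  gcongr
  exact colength_le_colength_of_maximalIdeal_pow_le hR (hc k hk) (hcd k hk)

theorem mult_le_volSeq_mul_pow {b : ℕ → Ideal R} {N m : ℕ}
    (hb : ∀ k, 1 ≤ k → maximalIdeal R ^ (N * k) ≤ b k)
    (hbm : ∀ k, 1 ≤ k → b (m * k) ≤ b m ^ k) (hm : 1 ≤ m) :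
    mult R n (b m) ≤ volSeq R n b * (m : ℝ) ^ n := by
  rw [mult_eq_volSeq, volSeq_eq_limsup, volSeq_eq_limsup]
  refine limsup_le_limsup_mul_of_le_comp_mul (normColength_nonneg _) (normColength_nonneg b)
    (isBoundedUnder_normColength hR (eventually_atTop.mpr ⟨1, hb⟩)) (fun _ => by positivity)
    (tendsto_id.const_mul_atTop' hm) tendsto_const_nhds
    (eventually_atTop.mpr ⟨1, fun k hk => ?_⟩)
  have hmk : 1 ≤ m * k := Nat.mul_pos hm hk
  have hratio : ((m * k : ℕ) : ℝ) / k = m := by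
    push_cast; field_simp
  simpa only [id, hratio] using normColength_le_mul_div_pow (n := n) (c := (b m ^ ·)) (j := k)
    (by omega) (colength_le_colength_of_maximalIdeal_pow_le hR (hb _ hmk) (hbm k hk))

theorem multSeq_le_volSeq {b : ℕ → Ideal R} {N : ℕ}
    (hb : ∀ k, 1 ≤ k → maximalIdeal R ^ (N * k) ≤ b k)
    (hrev : ∀ m k, 1 ≤ m → 1 ≤ k → b (m * k) ≤ b m ^ k) : multSeq R n b ≤ volSeq R n b := by
  refine limsup_le_of_le (isCoboundedUnder_le_of_le atTop fun m =>
    div_nonneg (volSeq_nonneg _) (by positivity)) (eventually_atTop.mpr ⟨1, fun m hm => ?_⟩)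
  rw [div_le_iff₀ (by positivity)]
  exact mult_le_volSeq_mul_pow hR hb (hrev m · hm) hm

theorem volSeq_le_mult_div_pow_of_pow_le {a : ℕ → Ideal R} {N m c : ℕ}
    (hm : 1 ≤ m) (hc : 1 ≤ c) (haN : maximalIdeal R ^ N ≤ a m)
    (ha : ∀ j, 1 ≤ j → a m ^ ((j - 1) / m + c) ≤ a j) :
    volSeq R n a ≤ mult R n (a m) / (m : ℝ) ^ n := by
  set K : ℕ → ℕ := fun j => (j - 1) / m + c
  have hK : Tendsto K atTop atTop := tendsto_atTop_atTop.mpr fun B =>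
    ⟨m * B + 1, fun j hj => le_add_right <| (Nat.le_div_iff_mul_le hm).mpr <| by
      rw [Nat.mul_comm]; omega⟩
  have hratio : ∀ j, 1 ≤ j → (K j : ℝ) / j ≤ 1 / m + c / j := fun j hj => by
    have hq : (((j - 1) / m : ℕ) : ℝ) ≤ j / m :=
      Nat.cast_div_le.trans (by gcongr; exact_mod_cast Nat.sub_le j 1)
    calc (K j : ℝ) / j = (((j - 1) / m : ℕ) : ℝ) / j + c / j := by
          simp only [K]; push_cast; rw [add_div]
      _ ≤ j / m / j + c / j := by gcongr
      _ = 1 / m + c / j := by field_simp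
  have hlim : Tendsto (fun j : ℕ => (1 / (m : ℝ) + c / j) ^ n) atTop (𝓝 ((1 / (m : ℝ)) ^ n)) := by
    have := ((tendsto_const_nhds (x := 1 / (m : ℝ))).add
      (tendsto_const_div_atTop_nhds_zero_nat (c : ℝ))).pow n
    rwa [add_zero] at this
  rw [mult_eq_volSeq, volSeq_eq_limsup, volSeq_eq_limsup, div_eq_mul_one_div, ← one_div_pow]
  refine limsup_le_limsup_mul_of_le_comp_mul (normColength_nonneg a) (normColength_nonneg _)
    (isBoundedUnder_normColength hR (N := N) (.of_forall fun k => ?_)) (fun _ => by positivity)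
    hK hlim (eventually_atTop.mpr ⟨1, fun j hj => ?_⟩)
  · rw [pow_mul]; exact Ideal.pow_right_mono haN k
  · have hKj : K j ≠ 0 := (Nat.lt_add_left _ hc).ne'
    calc normColength R n a j ≤ normColength R n (a m ^ ·) (K j) * ((K j : ℝ) / j) ^ n :=
          normColength_le_mul_div_pow hKj <| colength_le_colength_of_maximalIdeal_pow_le hR
            (N := N * K j) (by rw [pow_mul]; exact Ideal.pow_right_mono haN _) (ha j hj)
      _ ≤ normColength R n (a m ^ ·) (K j) * (1 / m + c / j) ^ n :=
          mul_le_mul_of_nonneg_left (pow_le_pow_left₀ (by positivity) (hratio j hj) n)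
            (normColength_nonneg _ _)

theorem volSeq_le_mult_div_pow (hn : 1 ≤ n)
    {a : ℕ → Ideal R} (ha : ∀ p q, a p * a q ≤ a (p + q)) {N m : ℕ}
    (haN : ∀ k, 1 ≤ k → maximalIdeal R ^ (N * k) ≤ a k) (hm : 1 ≤ m) :
    volSeq R n a ≤ mult R n (a m) / (m : ℝ) ^ n := by
  have hkey : ∀ j, 1 ≤ j → a m ^ ((j - 1) / m) * maximalIdeal R ^ (N * m) ≤ a j :=
    fun j hj => pow_mul_pow_le_of_graded ha haN hm hj
  by_cases htop : a m = ⊤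
  · refine (volSeq_nonpos_of_maximalIdeal_pow_le hR hn (N := N * m)
      (eventually_atTop.mpr ⟨1, fun j hj => ?_⟩)).trans
      (div_nonneg (volSeq_nonneg _) (by positivity))
    simpa [htop, Ideal.top_pow] using hkey j hj
  refine volSeq_le_mult_div_pow_of_pow_le hR hm (Nat.succ_pos (N * m)) (haN m hm) fun j hj => ?_
  calc a m ^ ((j - 1) / m + (N * m + 1)) = a m ^ ((j - 1) / m) * a m ^ (N * m + 1) :=
        pow_add _ _ _
    _ ≤ a m ^ ((j - 1) / m) * maximalIdeal R ^ (N * m) :=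
        Ideal.mul_mono_right <| (Ideal.pow_right_mono (le_maximalIdeal htop) _).trans
          (Ideal.pow_le_pow_right (Nat.le_succ _))
    _ ≤ a j := hkey j hj

theorem volSeq_le_multSeq (hn : 1 ≤ n)
    {a : ℕ → Ideal R} (ha : ∀ p q, a p * a q ≤ a (p + q)) {N : ℕ}
    (haN : ∀ k, 1 ≤ k → maximalIdeal R ^ (N * k) ≤ a k) : volSeq R n a ≤ multSeq R n a := by
  have hbdd : ∀ m, 1 ≤ m → mult R n (a m) / (m : ℝ) ^ n ≤ Nat.factorial n * (N : ℝ) ^ n :=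
    fun m hm => by
      rw [div_le_iff₀ (by positivity), mult_eq_volSeq, mul_assoc, ← mul_pow]
      exact_mod_cast volSeq_le_of_maximalIdeal_pow_le hR (N := N * m)
        (.of_forall fun k => by rw [pow_mul]; exact Ideal.pow_right_mono (haN m hm) k)
  exact le_limsup_of_frequently_le
    (eventually_atTop.mpr ⟨1, fun m hm => volSeq_le_mult_div_pow hR hn ha haN hm⟩).frequently
    (isBoundedUnder_of_eventually_le (eventually_atTop.mpr ⟨1, hbdd⟩))

end MaximalIdealAdic

theorem multSeq_le_volSeq_le_volSeq_le_multSeq_general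
    {R : Type*} [CommRing R] [IsLocalRing R]
    (n : ℕ) (hn : 1 ≤ n)
    (hreg : ∃ s : Finset R, s.card = n ∧ Ideal.span (s : Set R) = maximalIdeal R)
    (a b : ℕ → Ideal R)
    (hgraded : ∀ p q : ℕ, a p * a q ≤ a (p + q))
    (hzerodima : ∀ m : ℕ, IsFiniteLength R (R ⧸ a m))
    (hrev : ∀ p q : ℕ, 1 ≤ p → 1 ≤ q → b (p + q) ≤ b p * b q)
    (hdom : ∀ m : ℕ, 1 ≤ m → a m ≤ b m) :
    multSeq R n b ≤ volSeq R n b ∧ volSeq R n b ≤ volSeq R n a ∧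
      volSeq R n a ≤ multSeq R n a := by
  obtain ⟨s, rfl, hs⟩ := hreg
  have hR := length_quotient_maximalIdeal_pow_le hs
  obtain ⟨N, hN⟩ := exists_maximalIdeal_pow_le_of_isFiniteLength (hzerodima 1)
  have haN : ∀ k, 1 ≤ k → maximalIdeal R ^ (N * k) ≤ a k := fun k hk => by
    simpa [pow_mul] using (Ideal.pow_right_mono hN k).trans (pow_le_of_graded hgraded 1 hk)
  have hbN : ∀ k, 1 ≤ k → maximalIdeal R ^ (N * k) ≤ b k := fun k hk =>
    (haN k hk).trans (hdom k hk)
  exact ⟨multSeq_le_volSeq hR hbN fun m k hm hk => le_pow_of_reverseGraded hrev hm hk,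
    volSeq_le_volSeq_of_le hR haN hdom, volSeq_le_multSeq hR hn hgraded haN⟩

/-- If `b_•` is a reverse-graded sequence of zero-dimensional ideals dominating the
graded sequence `a_•`, then `e(b_•) ≤ vol(b_•) ≤ vol(a_•) ≤ e(a_•)`. -/
theorem multSeq_le_volSeq_le_volSeq_le_multSeq
    {R : Type*} [CommRing R] [IsLocalRing R] [IsNoetherianRing R]
    {K : Type*} [Field K] [Algebra K R]
    (n : ℕ) (hn : 1 ≤ n) (hdim : ringKrullDim R = n)
    (hreg : ∃ s : Finset R, s.card = n ∧ Ideal.span (s : Set R) = maximalIdeal R)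
    (a b : ℕ → Ideal R)
    (hgraded : ∀ p q : ℕ, a p * a q ≤ a (p + q))
    (hzerodima : ∀ m : ℕ, IsFiniteLength R (R ⧸ a m))
    (hmono : ∀ p q : ℕ, 1 ≤ q → q < p → b p ≤ b q)
    (hrev : ∀ p q : ℕ, 1 ≤ p → 1 ≤ q → b (p + q) ≤ b p * b q)
    (hzerodimb : ∀ m : ℕ, 1 ≤ m → IsFiniteLength R (R ⧸ b m))
    (hdom : ∀ m : ℕ, 1 ≤ m → a m ≤ b m) :
    multSeq R n b ≤ volSeq R n b ∧ volSeq R n b ≤ volSeq R n a ∧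
      volSeq R n a ≤ multSeq R n a :=
  multSeq_le_volSeq_le_volSeq_le_multSeq_general n hn hreg a b hgraded hzerodima hrev hdom
end

section
/- Let a and a' be monomial ideals in R = K[X_1,…,X_n] and let λ ∈ ℚ_{>0}. Then I(λ·(a·a')) ⊆ I(λ·a)·I(λ·a'). -/
open Filter MvPolynomial
open scoped Pointwise

/-!
Since `a·a'` is generated by products of monomials, `P_{aa'} ⊆ P_a + P_{a'}`. If `v + e` lies in
the interior of `λ·P_{aa'}`, some point `λ(p + p')` with `p ∈ P_a`, `p' ∈ P_{a'}` lies strictly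
below `v + e` in every coordinate. Rounding `λp` down to an integer vector `u` and putting
`u' = v - u` gives `u + e > λp` and `u' + e > λp'`. Newton polyhedra are stable under adding the
nonnegative orthant, so a point strictly above a point of `P` lies in `Int P`; hence
`X^u ∈ I(λ·a)` and `X^{u'} ∈ I(λ·a')`.
-/

open Topology

lemma monomial_mem_of_le {σ R : Type*} [CommSemiring R] {I : Ideal (MvPolynomial σ R)}
    {u w : σ →₀ ℕ} (hu : monomial u (1 : R) ∈ I) (huw : u ≤ w) : monomial w (1 : R) ∈ I := by
  have : monomial w (1 : R) = monomial (w - u) 1 * monomial u 1 := by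
    rw [monomial_mul, one_mul, tsub_add_cancel_of_le huw]
  exact this ▸ I.mul_mem_left _ hu

lemma exists_mem_forall_lt_of_mem_interior {ι : Type*} {s : Set (ι → ℝ)} {x : ι → ℝ}
    (hx : x ∈ interior s) : ∃ z ∈ s, ∀ i, z i < x i := by
  have hlim : Tendsto (fun δ : ℝ => x - δ • 1) (𝓝[>] 0) (𝓝 x) := by
    have : Continuous fun δ : ℝ => x - δ • (1 : ι → ℝ) := by fun_prop
    simpa using (this.tendsto 0).mono_left nhdsWithin_le_nhds
  obtain ⟨δ, hδs, hδ⟩ :=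
    ((hlim.eventually (mem_interior_iff_mem_nhds.1 hx)).and self_mem_nhdsWithin).exists
  exact ⟨_, hδs, fun i => by simpa using hδ⟩

lemma exists_add_eq_and_lt_add_one {ι : Type*} [Finite ι] {x y : ι → ℝ} (hx : 0 ≤ x)
    (hy : 0 ≤ y) {v : ι →₀ ℕ} (hxy : ∀ i, x i + y i < v i + 1) :
    ∃ u u' : ι →₀ ℕ, u + u' = v ∧ (∀ i, x i < u i + 1) ∧ ∀ i, y i < u' i + 1 := by
  set u : ι →₀ ℕ := Finsupp.equivFunOnFinite.symm fun i => ⌊x i⌋₊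
  have hux : ∀ i, (u i : ℝ) ≤ x i := fun i => Nat.floor_le (hx i)
  have huv : u ≤ v := Finsupp.le_def.2 fun i =>
    Nat.lt_succ_iff.1 <| (Nat.floor_lt (hx i)).2 <| by
      push_cast; linarith [show (0 : ℝ) ≤ y i from hy i, hxy i]
  refine ⟨u, v - u, add_tsub_cancel_of_le huv, fun i => Nat.lt_floor_add_one (x i), fun i => ?_⟩
  rw [Finsupp.tsub_apply, Nat.cast_sub (huv i)]
  linarith [hux i, hxy i]

section Newton

variable {K : Type*} [Field K] {n : ℕ} {a a' : Ideal (MvPolynomial (Fin n) K)} {p : Fin n → ℝ}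

lemma newton_subset_Ici : newton a ⊆ Set.Ici 0 :=
  convexHull_min (by rintro _ ⟨v, -, rfl⟩ i; positivity) (convex_Ici 0)

lemma add_natCast_mem_newton (hp : p ∈ newton a) (w : Fin n →₀ ℕ) :
    p + (fun i => (w i : ℝ)) ∈ newton a := by
  refine convexHull_min ?_ ((convex_convexHull ℝ _).translate_preimage_left _) hp
  rintro _ ⟨v, hv, rfl⟩
  exact subset_convexHull ℝ _ ⟨v + w, monomial_mem_of_le hv le_self_add, by ext; simp⟩

lemma add_single_mem_newton (hp : p ∈ newton a) (j : Fin n) {c : ℝ} (hc : 0 ≤ c) :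
    p + Pi.single j c ∈ newton a := by
  set N : ℕ := ⌈c⌉₊ + 1
  have hN : (0 : ℝ) < N := by positivity
  have hsingle : (fun i => (Finsupp.single j N i : ℝ)) = Pi.single j (N : ℝ) := by
    ext i; by_cases h : i = j <;> simp [h]
  have ht : c / N ∈ Set.Icc (0 : ℝ) 1 :=
    ⟨by positivity, (div_le_one hN).2 (by push_cast [N]; linarith [Nat.le_ceil c])⟩
  have := (convex_convexHull ℝ _).add_smul_mem hp (add_natCast_mem_newton hp (.single j N)) ht
  rwa [hsingle, ← Pi.single_smul, smul_eq_mul, div_mul_cancel₀ _ hN.ne'] at this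

lemma add_mem_newton (hp : p ∈ newton a) {d : Fin n → ℝ} (hd : 0 ≤ d) : p + d ∈ newton a := by
  rw [← Finset.univ_sum_single d]
  refine Finset.sum_induction _ (fun e => ∀ q ∈ newton a, q + e ∈ newton a)
    (fun e e' he he' q hq => add_assoc q e e' ▸ he' _ (he q hq))
    (fun q hq => by rwa [add_zero]) (fun j _ q hq => add_single_mem_newton hq j (hd j)) p hp

lemma mem_interior_newton_of_lt (hp : p ∈ newton a) {q : Fin n → ℝ} (hpq : ∀ i, p i < q i) :
    q ∈ interior (newton a) := by
  refine interior_maximal (fun z hz => ?_)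
    (isOpen_set_pi Set.finite_univ fun i _ => isOpen_Ioi) (by simpa using hpq)
  simpa using add_mem_newton hp (d := z - p) fun i => sub_nonneg.2 (hz i (Set.mem_univ i)).le

lemma exists_add_eq_of_monomial_mem_mul (ha : IsMonomialIdeal a) (ha' : IsMonomialIdeal a')
    {v : Fin n →₀ ℕ} (hv : monomial v (1 : K) ∈ a * a') :
    ∃ u u', u + u' = v ∧ monomial u (1 : K) ∈ a ∧ monomial u' (1 : K) ∈ a' := by
  set S := {u : Fin n →₀ ℕ | monomial u (1 : K) ∈ a}
  set S' := {u : Fin n →₀ ℕ | monomial u (1 : K) ∈ a'}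
  have hle : a * a' ≤ Ideal.span ((fun u => monomial u (1 : K)) '' (S + S')) := by
    rw [ha, ha', Ideal.span_mul_span', Ideal.span_le]
    rintro _ ⟨_, ⟨u, hu, rfl⟩, _, ⟨u', hu', rfl⟩, rfl⟩
    exact Ideal.subset_span ⟨u + u', Set.add_mem_add hu hu', by simp [monomial_mul]⟩
  obtain ⟨_, ⟨u, hu, u', hu', rfl⟩, huv⟩ :=
    mem_ideal_span_monomial_image.1 (hle hv) v (by simp)
  exact ⟨u, v - u, add_tsub_cancel_of_le (le_self_add.trans huv), hu,
    monomial_mem_of_le hu' (le_tsub_of_add_le_left huv)⟩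

lemma newton_mul_subset (ha : IsMonomialIdeal a) (ha' : IsMonomialIdeal a') :
    newton (a * a') ⊆ newton a + newton a' := by
  refine convexHull_min ?_ ((convex_convexHull ℝ _).add (convex_convexHull ℝ _))
  rintro _ ⟨v, hv, rfl⟩
  obtain ⟨u, u', rfl, hu, hu'⟩ := exists_add_eq_of_monomial_mem_mul ha ha' hv
  exact ⟨_, subset_convexHull ℝ _ ⟨u, hu, rfl⟩, _, subset_convexHull ℝ _ ⟨u', hu', rfl⟩,
    by ext; simp⟩

lemma monomial_mem_multiplierIdeal {L : ℝ} (hL : 0 < L) (hp : p ∈ newton a) {u : Fin n →₀ ℕ}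
    (hu : ∀ i, L * p i < u i + 1) : monomial u (1 : K) ∈ multiplierIdeal L a := by
  refine Ideal.subset_span ⟨u, ?_, rfl⟩
  rw [Set.mem_ofPred_eq, interior_smul₀ hL.ne', ← smul_inv_smul₀ hL.ne' fun i => (u i : ℝ) + 1]
  refine Set.smul_mem_smul_set (mem_interior_newton_of_lt hp fun i => ?_)
  rw [Pi.smul_apply, smul_eq_mul, lt_inv_mul_iff₀ hL]
  exact hu i

end Newton

theorem multiplierIdeal_mul_le_general
    {K : Type*} [Field K] {n : ℕ}
    (a a' : Ideal (MvPolynomial (Fin n) K))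
    (ha : IsMonomialIdeal a) (ha' : IsMonomialIdeal a')
    (lam : ℚ) (hlam : 0 < lam) :
    multiplierIdeal ((lam : ℝ)) (a * a') ≤
      multiplierIdeal ((lam : ℝ)) a * multiplierIdeal ((lam : ℝ)) a' := by
  have hL : (0 : ℝ) < lam := by exact_mod_cast hlam
  rw [multiplierIdeal, Ideal.span_le]
  rintro _ ⟨v, hv, rfl⟩
  obtain ⟨_, ⟨q, hq, rfl⟩, hqv⟩ := exists_mem_forall_lt_of_mem_interior hv
  obtain ⟨p, hp, p', hp', rfl⟩ := newton_mul_subset ha ha' hq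
  obtain ⟨u, u', rfl, hu, hu'⟩ := exists_add_eq_and_lt_add_one
    (smul_nonneg hL.le (newton_subset_Ici hp)) (smul_nonneg hL.le (newton_subset_Ici hp'))
    fun i => by simpa [mul_add] using hqv i
  show monomial (u + u') (1 : K) ∈ _
  rw [← one_mul (1 : K), ← monomial_mul]
  exact Ideal.mul_mem_mul (monomial_mem_multiplierIdeal hL hp hu)
    (monomial_mem_multiplierIdeal hL hp' hu')

/-- Subadditivity for multiplier ideals of monomial ideals:
`I(λ·(a·a')) ⊆ I(λ·a)·I(λ·a')`. -/
theorem multiplierIdeal_mul_le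
    {K : Type*} [Field K] {n : ℕ} (hn : 1 ≤ n)
    (a a' : Ideal (MvPolynomial (Fin n) K))
    (ha : IsMonomialIdeal a) (ha' : IsMonomialIdeal a')
    (lam : ℚ) (hlam : 0 < lam) :
    multiplierIdeal ((lam : ℝ)) (a * a') ≤
      multiplierIdeal ((lam : ℝ)) a * multiplierIdeal ((lam : ℝ)) a' :=
  multiplierIdeal_mul_le_general a a' ha ha' lam hlam
end

section
/- Let a_• be a saturated graded sequence of monomial ideals in R = K[X_1,…,X_n], each supported at the origin, and let b_• be the corresponding sequence of asymptotic multiplier ideals. Then X_1···X_n ∈ (a_m : b_m) for every m ≥ 1, and the graded sequence of colon ideals c_m := (a_m : b_m) satisfies e(c_•) = 0. -/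
open Filter MvPolynomial
open scoped Pointwise

/-!
Proof idea. A generator `X^u` of `b_m` comes with some `p` such that `u + e ∈ (m/p)·P_{a_p}`.
Gradedness gives `m·P_{a_p} ⊆ P_{a_{mp}}`, so `p(u + e) ∈ P_{a_{mp}}` and saturation yields
`X^{u+e} ∈ a_m`; thus `X_1⋯X_n ∈ c_m`. Moreover `c_m ⊇ a_m ⊇ a_1^m ⊇ 𝔪^{Nm}`, where
`𝔪 = (X_1,…,X_n)`. If an ideal `c` contains `X_1⋯X_n` and `𝔪^K`, then `c^k` contains every
monomial except those with some exponent below `k` and all exponents below `(K+1)k`; there are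
at most `n·k·((K+1)k)^{n-1}` of them, so `e(c_m) ≤ n!·n·(Nm+1)^{n-1} = O(m^{n-1})` and
`e(c_•) = 0`.
-/

open Finset

section GradedSequence

variable {R : Type*} [CommSemiring R] {a : ℕ → Ideal R}

theorem pow_le_of_graded_s17 (hgraded : ∀ p q : ℕ, a p * a q ≤ a (p + q)) (p : ℕ) {s : ℕ}
    (hs : 1 ≤ s) : a p ^ s ≤ a (s * p) := by
  induction s, hs using Nat.le_induction with
  | base => simp
  | succ s _ ih =>
    calc a p ^ (s + 1) = a p ^ s * a p := pow_succ _ _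
      _ ≤ a (s * p) * a p := Ideal.mul_mono_left ih
      _ ≤ a ((s + 1) * p) := by rw [add_one_mul]; exact hgraded _ _

end GradedSequence

theorem limsup_mem_Icc_of_eventually_mem {α : Type*} {f : Filter α} [f.NeBot] {u : α → ℝ}
    {lo hi : ℝ} (h : ∀ᶠ x in f, u x ∈ Set.Icc lo hi) : limsup u f ∈ Set.Icc lo hi :=
  ⟨le_limsup_of_frequently_le (h.mono fun _ hx => hx.1).frequently
      ⟨hi, eventually_map.2 (h.mono fun _ hx => hx.2)⟩,
    limsup_le_of_le (isCoboundedUnder_le_of_eventually_le f (h.mono fun _ hx => hx.1))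
      (h.mono fun _ hx => hx.2)⟩

theorem mul_pow_sub_one_mul_le (n N : ℕ) {m : ℕ} (hm : 1 ≤ m) :
    (n : ℝ) * (N * m + 1) ^ (n - 1) * m ≤ n * (N + 1) ^ (n - 1) * m ^ n := by
  have hm' : (1 : ℝ) ≤ m := by exact_mod_cast hm
  cases n with
  | zero => simp
  | succ n =>
    rw [Nat.add_sub_cancel, pow_succ, ← mul_assoc, mul_assoc _ ((N + 1 : ℝ) ^ n), ← mul_pow]
    gcongr
    nlinarith

section MonomialIdeals

variable {K : Type*} [Field K] {n : ℕ}

noncomputable def onesExp (n : ℕ) : Fin n →₀ ℕ := Finsupp.equivFunOnFinite.symm 1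

@[simp]
theorem onesExp_apply (i : Fin n) : onesExp n i = 1 := rfl

theorem prod_X_eq_monomial_onesExp :
    (∏ i, X i : MvPolynomial (Fin n) K) = monomial (onesExp n) 1 := by
  rw [← prod_X_pow_eq_monomial]
  simp [onesExp]

section Newton

variable {a : ℕ → Ideal (MvPolynomial (Fin n) K)}

theorem smul_newton_subset (hgraded : ∀ p q : ℕ, a p * a q ≤ a (p + q)) (p : ℕ) {s : ℕ}
    (hs : 1 ≤ s) : (s : ℝ) • newton (a p) ⊆ newton (a (s * p)) := by
  rw [newton, ← convexHull_smul]
  refine convexHull_mono ?_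
  rintro _ ⟨_, ⟨v, hv, rfl⟩, rfl⟩
  refine ⟨s • v, ?_, ?_⟩
  · have hpow : (monomial (s • v) (1 : K) : MvPolynomial (Fin n) K) = monomial v 1 ^ s := by
      rw [monomial_pow, one_pow]
    exact pow_le_of_graded_s17 hgraded p hs (hpow ▸ Ideal.pow_mem_pow hv s)
  · ext i
    simp

theorem monomial_add_onesExp_mem_of_mem_smul_newton (hgraded : ∀ p q : ℕ, a p * a q ≤ a (p + q))
    (hsat : ∀ m r : ℕ, 1 ≤ m → 1 ≤ r → ∀ v : Fin n →₀ ℕ,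
      (fun i => ((r : ℝ)) * (v i : ℝ)) ∈ newton (a (m * r)) → monomial v (1 : K) ∈ a m)
    {m p : ℕ} (hm : 1 ≤ m) (hp : 1 ≤ p) {v : Fin n →₀ ℕ}
    (hv : (fun i => (v i : ℝ) + 1) ∈ ((m : ℝ) / p) • newton (a p)) :
    monomial (v + onesExp n) (1 : K) ∈ a m := by
  obtain ⟨y, hy, hvy⟩ := hv
  refine hsat m p hm hp _ ?_
  have hscale : (fun i => (p : ℝ) * ((v + onesExp n) i : ℕ)) = (m : ℝ) • y := by
    ext i
    have hi := congrFun hvy i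
    simp only [Pi.smul_apply, smul_eq_mul] at hi ⊢
    simp only [Finsupp.add_apply, onesExp_apply]
    push_cast
    rw [← hi]
    field_simp
  exact hscale ▸ smul_newton_subset hgraded p hm (Set.smul_mem_smul_set hy)

theorem prod_X_mem_colon_asympMultiplierIdeal (hgraded : ∀ p q : ℕ, a p * a q ≤ a (p + q))
    (hsat : ∀ m r : ℕ, 1 ≤ m → 1 ≤ r → ∀ v : Fin n →₀ ℕ,
      (fun i => ((r : ℝ)) * (v i : ℝ)) ∈ newton (a (m * r)) → monomial v (1 : K) ∈ a m)
    {m : ℕ} (hm : 1 ≤ m) :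
    (∏ i, X i : MvPolynomial (Fin n) K) ∈ (a m).colon (asympMultiplierIdeal a m) := by
  rw [asympMultiplierIdeal, Ideal.colon_span, Submodule.mem_colon]
  rintro _ ⟨v, ⟨p, hp, hv⟩, rfl⟩
  rw [smul_eq_mul, prod_X_eq_monomial_onesExp, monomial_mul, one_mul, add_comm]
  exact monomial_add_onesExp_mem_of_mem_smul_newton hgraded hsat hm hp (interior_subset hv)

end Newton

theorem monomial_mem_pow_idealOfVars {σ : Type*} {u : σ →₀ ℕ} {d : ℕ} (hd : d ≤ u.degree) :
    (monomial u (1 : K) : MvPolynomial σ K) ∈ idealOfVars σ K ^ d := by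
  classical
  rw [mem_pow_idealOfVars_iff, support_monomial, if_neg one_ne_zero]
  simpa using hd

theorem finrank_quotient_le_card {σ : Type*} (I : Ideal (MvPolynomial σ K))
    (S : Finset (σ →₀ ℕ)) (hS : ∀ u ∉ S, monomial u (1 : K) ∈ I) :
    Module.finrank K (MvPolynomial σ K ⧸ I) ≤ #S := by
  let π := (Ideal.Quotient.mkₐ K I).toLinearMap
  have hspan : Submodule.span K (Set.range fun u : S => π (monomial u 1)) = ⊤ := by
    have htop : Submodule.span K (π '' Set.range fun u => monomial u (1 : K)) = ⊤ := by
      rw [Submodule.span_image, ← coe_basisMonomials, (basisMonomials σ K).span_eq,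
        Submodule.map_top, LinearMap.range_eq_top.2 (Ideal.Quotient.mkₐ_surjective K I)]
    refine eq_top_iff.2 (htop ▸ Submodule.span_le.2 ?_)
    rintro _ ⟨_, ⟨u, rfl⟩, rfl⟩
    by_cases hu : u ∈ S
    · exact Submodule.subset_span ⟨⟨u, hu⟩, rfl⟩
    · simp [π, Ideal.Quotient.eq_zero_iff_mem.2 (hS u hu)]
  simpa using finrank_le_of_span_eq_top hspan

theorem card_filter_exists_lt_le {ι : Type*} [Fintype ι] [DecidableEq ι] (k D : ℕ) :
    #{f ∈ Fintype.piFinset fun _ : ι => range D | ∃ i, f i < k}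
      ≤ Fintype.card ι * (k * D ^ (Fintype.card ι - 1)) := by
  calc _ ≤ #(univ.biUnion fun i =>
        Fintype.piFinset (Function.update (fun _ => range D) i (range k))) := by
        refine card_le_card fun f hf => ?_
        simp only [mem_filter, Fintype.mem_piFinset, mem_range] at hf
        obtain ⟨hD, i, hi⟩ := hf
        refine mem_biUnion.2 ⟨i, mem_univ i, Fintype.mem_piFinset.2 fun j => ?_⟩
        rcases eq_or_ne j i with rfl | hj <;> simp [*]
    _ ≤ ∑ i, #(Fintype.piFinset (Function.update (fun _ => range D) i (range k))) :=
        card_biUnion_le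
    _ = ∑ _i : ι, k * D ^ (Fintype.card ι - 1) := by
        refine sum_congr rfl fun i _ => ?_
        simp [Function.apply_update (fun _ s => #s), prod_update_of_mem, card_sdiff]
    _ = _ := by simp

section Multiplicity

variable {c : Ideal (MvPolynomial (Fin n) K)} {N : ℕ}

theorem monomial_eq_prod_X_pow_mul {u : Fin n →₀ ℕ} {s : ℕ} (hs : ∀ i, s ≤ u i) :
    (monomial u (1 : K) : MvPolynomial (Fin n) K)
      = (∏ i, X i) ^ s * monomial (u - s • onesExp n) 1 := by
  rw [prod_X_eq_monomial_onesExp, monomial_pow, one_pow, monomial_mul, one_mul]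
  refine congrArg (monomial · (1 : K)) (Finsupp.ext fun i => ?_)
  have := hs i
  simp only [Finsupp.add_apply, Finsupp.tsub_apply, Finsupp.smul_apply, onesExp_apply,
    smul_eq_mul, mul_one]
  omega

theorem monomial_mem_pow_of_prod_X_mem (hX : ∏ i, X i ∈ c) (hN : idealOfVars (Fin n) K ^ N ≤ c)
    {k : ℕ} {u : Fin n →₀ ℕ} (hu : (∀ i, k ≤ u i) ∨ ∃ j, (N + 1) * k ≤ u j) :
    monomial u (1 : K) ∈ c ^ k := by
  by_cases hall : ∀ i, k ≤ u i
  · rw [monomial_eq_prod_X_pow_mul hall]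
    exact Ideal.mul_mem_right _ _ (Ideal.pow_mem_pow hX k)
  obtain ⟨j, hj⟩ := hu.resolve_left hall
  push Not at hall
  obtain ⟨i, hi⟩ := hall
  have : Nonempty (Fin n) := ⟨i⟩
  obtain ⟨i₀, hi₀⟩ := Finite.exists_min u
  set t := u i₀
  have htk : t < k := (hi₀ i).trans_lt hi
  have hdeg : N * (k - t) ≤ (u - t • onesExp n).degree := by
    calc N * (k - t) ≤ u j - t := by
          have := Nat.mul_le_mul_left N (Nat.sub_le k t)
          rw [add_one_mul] at hj
          omega
      _ = (u - t • onesExp n) j := by simp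
      _ ≤ _ := by
        rw [Finsupp.degree_eq_sum]
        exact single_le_sum (fun _ _ => Nat.zero_le _) (mem_univ j)
  have hrest : monomial (u - t • onesExp n) (1 : K) ∈ c ^ (k - t) := by
    have := monomial_mem_pow_idealOfVars (K := K) hdeg
    rw [pow_mul] at this
    exact Ideal.pow_right_mono hN _ this
  rw [monomial_eq_prod_X_pow_mul hi₀, ← Nat.add_sub_cancel' htk.le, pow_add]
  exact Ideal.mul_mem_mul (Ideal.pow_mem_pow hX t) hrest

theorem finrank_quotient_pow_le (hX : ∏ i, X i ∈ c) (hN : idealOfVars (Fin n) K ^ N ≤ c)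
    (k : ℕ) :
    Module.finrank K (MvPolynomial (Fin n) K ⧸ c ^ k) ≤ n * (N + 1) ^ (n - 1) * k ^ n := by
  set D := (N + 1) * k
  calc _ ≤ #({f ∈ Fintype.piFinset fun _ : Fin n => range D | ∃ i, f i < k}.map
        (Finsupp.equivFunOnFinite (α := Fin n) (M := ℕ)).symm.toEmbedding) := by
        refine finrank_quotient_le_card _ _ fun u hu => monomial_mem_pow_of_prod_X_mem hX hN ?_
        by_contra h
        push Not at h
        exact hu (mem_map_equiv.2 (by simpa [D] using h.symm))
    _ ≤ n * (k * D ^ (n - 1)) := by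
        rw [card_map]
        convert card_filter_exists_lt_le (ι := Fin n) k D <;> simp
    _ = n * (N + 1) ^ (n - 1) * k ^ n := by cases n <;> simp [D, mul_pow, pow_succ]; ring

theorem polyMult_mem_Icc (hX : ∏ i, X i ∈ c) (hN : idealOfVars (Fin n) K ^ N ≤ c) :
    polyMult c ∈ Set.Icc 0 ((n.factorial : ℝ) * n * (N + 1) ^ (n - 1)) := by
  refine limsup_mem_Icc_of_eventually_mem
    ((eventually_gt_atTop 0).mono fun k hk => ⟨by positivity, ?_⟩)
  rw [div_le_iff₀ (by positivity)]
  have hdim := Nat.mul_le_mul_left n.factorial (finrank_quotient_pow_le hX hN k)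
  calc (n.factorial * Module.finrank K (MvPolynomial (Fin n) K ⧸ c ^ k) : ℝ)
      ≤ ((n.factorial * (n * (N + 1) ^ (n - 1) * k ^ n) : ℕ) : ℝ) := by exact_mod_cast hdim
    _ = _ := by push_cast; ring

end Multiplicity

theorem polyMultSeq_eq_zero_of_prod_X_mem {c : ℕ → Ideal (MvPolynomial (Fin n) K)} {N : ℕ}
    (hX : ∀ m, 1 ≤ m → ∏ i, X i ∈ c m)
    (hN : ∀ m, 1 ≤ m → idealOfVars (Fin n) K ^ (N * m) ≤ c m) :
    polyMultSeq c = 0 := by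
  refine Tendsto.limsup_eq (tendsto_of_tendsto_of_tendsto_of_le_of_le' tendsto_const_nhds
    (tendsto_const_div_atTop_nhds_zero_nat ((n.factorial : ℝ) * n * (N + 1) ^ (n - 1))) ?_ ?_)
  · filter_upwards [eventually_ge_atTop 1] with m hm
    exact div_nonneg (polyMult_mem_Icc (hX m hm) (hN m hm)).1 (by positivity)
  · filter_upwards [eventually_ge_atTop 1] with m hm
    have hm' : (0 : ℝ) < m := by exact_mod_cast hm
    rw [div_le_div_iff₀ (by positivity) hm']
    calc polyMult (c m) * m ≤ (n.factorial : ℝ) * n * ((N * m : ℕ) + 1) ^ (n - 1) * m := by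
          gcongr
          exact (polyMult_mem_Icc (hX m hm) (hN m hm)).2
      _ ≤ (n.factorial : ℝ) * n * (N + 1) ^ (n - 1) * m ^ n := by
          have := mul_pow_sub_one_mul_le n N hm
          push_cast
          nlinarith [Nat.factorial_pos n]

end MonomialIdeals

theorem colon_asympMultiplierIdeal_multSeq_zero_general
    {K : Type*} [Field K] {n : ℕ}
    (a : ℕ → Ideal (MvPolynomial (Fin n) K))
    (hgraded : ∀ p q : ℕ, a p * a q ≤ a (p + q))
    (hsupp : ∀ m : ℕ, SupportedAtOrigin (a m))
    (hsat : ∀ m r : ℕ, 1 ≤ m → 1 ≤ r → ∀ v : Fin n →₀ ℕ,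
      (fun i => ((r : ℝ)) * (v i : ℝ)) ∈ newton (a (m * r)) →
        monomial v (1 : K) ∈ a m)
    (b : ℕ → Ideal (MvPolynomial (Fin n) K))
    (hb : ∀ m : ℕ, 1 ≤ m → b m = asympMultiplierIdeal a m) :
    (∀ m : ℕ, 1 ≤ m → (∏ i : Fin n, X i : MvPolynomial (Fin n) K) ∈ (a m).colon (b m)) ∧
    polyMultSeq (fun m => (a m).colon (b m)) = 0 := by
  have hX : ∀ m, 1 ≤ m → (∏ i, X i : MvPolynomial (Fin n) K) ∈ (a m).colon (b m) :=
    fun m hm => hb m hm ▸ prod_X_mem_colon_asympMultiplierIdeal hgraded hsat hm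
  obtain ⟨N, hN⟩ := hsupp 1
  refine ⟨hX, polyMultSeq_eq_zero_of_prod_X_mem (N := N) hX fun m hm => ?_⟩
  calc idealOfVars (Fin n) K ^ (N * m) = (idealOfVars (Fin n) K ^ N) ^ m := pow_mul _ _ _
    _ ≤ a 1 ^ m := Ideal.pow_right_mono hN m
    _ ≤ a (m * 1) := pow_le_of_graded_s17 hgraded 1 hm
    _ = a m := by rw [mul_one]
    _ ≤ (a m).colon (b m) := Ideal.le_colon

/-- For a saturated graded sequence `a_•` of zero-dimensional monomial ideals with
asymptotic multiplier ideals `b_•`, the monomial `X_1⋯X_n` lies in every colon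
ideal `(a_m : b_m)`, and the graded sequence `c_m = (a_m : b_m)` has multiplicity
zero. -/
theorem colon_asympMultiplierIdeal_multSeq_zero
    {K : Type*} [Field K] {n : ℕ} (hn : 1 ≤ n)
    (a : ℕ → Ideal (MvPolynomial (Fin n) K))
    (hgraded : ∀ p q : ℕ, a p * a q ≤ a (p + q))
    (hmon : ∀ m : ℕ, IsMonomialIdeal (a m))
    (hsupp : ∀ m : ℕ, SupportedAtOrigin (a m))
    (hsat : ∀ m r : ℕ, 1 ≤ m → 1 ≤ r → ∀ v : Fin n →₀ ℕ,
      (fun i => ((r : ℝ)) * (v i : ℝ)) ∈ newton (a (m * r)) →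
        monomial v (1 : K) ∈ a m)
    (b : ℕ → Ideal (MvPolynomial (Fin n) K))
    (hb : ∀ m : ℕ, 1 ≤ m → b m = asympMultiplierIdeal a m) :
    (∀ m : ℕ, 1 ≤ m → (∏ i : Fin n, X i : MvPolynomial (Fin n) K) ∈ (a m).colon (b m)) ∧
    polyMultSeq (fun m => (a m).colon (b m)) = 0 :=
  colon_asympMultiplierIdeal_multSeq_zero_general a hgraded hsupp hsat b hb
end

section
/- Let a_• be a graded sequence of nonzero monomial ideals in R = K[X_1,…,X_n] and let b_• be the corresponding sequence of asymptotic multiplier ideals. Then lc(a_•) = lc(b_•); that is, sup_{m≥1} m·lc(a_m) = inf_{m≥1} m·lc(b_m) as elements of (0, ∞]. -/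
open Filter MvPolynomial
open scoped Pointwise

open scoped ENNReal

/-- The log canonical threshold of a monomial ideal, via Howald's theorem:
`1/lc(a) = inf{μ > 0 : μ·(1,…,1) ∈ P_a}`, with values in `(0,∞]`. -/
noncomputable def lcMonomial {K : Type*} [Field K] {n : ℕ}
    (a : Ideal (MvPolynomial (Fin n) K)) : ℝ≥0∞ :=
  (ENNReal.ofReal (sInf {μ : ℝ | 0 < μ ∧ (fun _ : Fin n => μ) ∈ newton a}))⁻¹

/-!
Write `T(c) = inf{μ > 0 : μ·e ∈ P_c}`, so that `lc(c) = 1/T(c)`, and `τ = inf_p T(a_p)/p`;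
then `lc(a_•) = 1/τ`. The Newton polyhedra are upward closed and `q·P_{a_p} ⊆ P_{a_{qp}}`, so
`Q = ⋃_p (1/p)·P_{a_p}` is convex. If `ν·e ∈ P_{a_p}` and `μ > (m/p)·ν`, the point `(⌊μ⌋ + 1)·e`
is interior to `(m/p)·P_{a_p}`, so `X^{⌊μ⌋·e} ∈ b_m`; hence `T(b_m) ≤ m·τ`. Conversely every
exponent `u` of `b_m` has `(u + e)/m ∈ Q`, so by convexity `(μ + 1)/m·e ∈ Q` whenever
`μ·e ∈ P_{b_m}`, which gives `m·τ - 1 ≤ T(b_m)`. Thus `τ = sup_m T(b_m)/m`, and `lc(b_•) = 1/τ`.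
-/

open Set

section Newton

variable {K : Type*} [Field K] {n : ℕ} {a : Ideal (MvPolynomial (Fin n) K)}

theorem exponent_mem_newton {v : Fin n →₀ ℕ} (hv : monomial v (1 : K) ∈ a) :
    (fun i => (v i : ℝ)) ∈ newton a :=
  subset_convexHull ℝ _ ⟨v, hv, rfl⟩

theorem newton_add_natCast_mem {x : Fin n → ℝ} (hx : x ∈ newton a) (k : Fin n →₀ ℕ) :
    x + (fun i => (k i : ℝ)) ∈ newton a := by
  refine convexHull_min ?_ ((convex_convexHull ℝ _).translate_preimage_left _) hx
  rintro _ ⟨v, hv, rfl⟩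
  have hvk : monomial (v + k) (1 : K) ∈ a := by
    rw [← mul_one (1 : K), ← monomial_mul]
    exact a.mul_mem_right _ hv
  have hcast : ((fun i => (v i : ℝ)) + fun i => (k i : ℝ)) = fun i => ((v + k) i : ℝ) := by
    ext i
    simp
  change _ + _ ∈ newton a
  rw [hcast]
  exact exponent_mem_newton hvk

theorem newton_add_single_mem {x : Fin n → ℝ} (hx : x ∈ newton a) (i : Fin n) {t : ℝ}
    (ht : 0 ≤ t) : x + Pi.single i t ∈ newton a := by
  set N := ⌈t⌉₊
  have hN : x + (N : ℝ) • Pi.single i 1 ∈ newton a := by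
    convert newton_add_natCast_mem hx (Finsupp.single i N) using 2
    ext j
    by_cases h : j = i <;> simp [h]
  have hθ : t / N ∈ Icc (0 : ℝ) 1 :=
    ⟨by positivity, div_le_one_of_le₀ (Nat.le_ceil t) (Nat.cast_nonneg N)⟩
  have h := (convex_convexHull ℝ _).add_smul_mem hx hN hθ
  rwa [smul_smul, div_mul_cancel_of_imp fun h =>
    le_antisymm (Nat.ceil_eq_zero.1 (by exact_mod_cast h)) ht, ← Pi.single_smul, smul_eq_mul,
    mul_one] at h

theorem newton_add_mem {x d : Fin n → ℝ} (hx : x ∈ newton a) (hd : 0 ≤ d) :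
    x + d ∈ newton a := by
  classical
  let D : AddSubmonoid (Fin n → ℝ) :=
    { carrier := {d | ∀ x ∈ newton a, x + d ∈ newton a}
      zero_mem' := fun x hx => by simpa using hx
      add_mem' := fun hd hd' x hx => by rw [← add_assoc]; exact hd' _ (hd x hx) }
  have hdD : d ∈ D := by
    rw [← Finset.univ_sum_single d]
    exact D.sum_mem fun i _ x hx => newton_add_single_mem hx i (hd i)
  exact hdD x hx

theorem pi_Ioi_subset_interior_newton {x : Fin n → ℝ} (hx : x ∈ newton a) :
    univ.pi (fun i => Ioi (x i)) ⊆ interior (newton a) := by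
  refine interior_maximal (fun y hy => ?_) (isOpen_set_pi finite_univ fun _ _ => isOpen_Ioi)
  simpa using newton_add_mem hx (d := y - x) fun i => sub_nonneg.2 (hy i trivial).le

-- `lcMonomial a` unfolds to `(ENNReal.ofReal (sInf (newtonDiagonal a)))⁻¹`.
def newtonDiagonal (a : Ideal (MvPolynomial (Fin n) K)) : Set ℝ :=
  {μ | 0 < μ ∧ (fun _ : Fin n => μ) ∈ newton a}

theorem newtonDiagonal_bddBelow : BddBelow (newtonDiagonal a) :=
  ⟨0, fun _ hμ => hμ.1.le⟩

theorem sInf_newtonDiagonal_nonneg : 0 ≤ sInf (newtonDiagonal a) :=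
  Real.sInf_nonneg fun _ hμ => hμ.1.le

theorem mem_newtonDiagonal_of_exponent_le {v : Fin n →₀ ℕ} (hv : monomial v (1 : K) ∈ a)
    {μ : ℝ} (hμ : 0 < μ) (hvμ : ∀ i, (v i : ℝ) ≤ μ) : μ ∈ newtonDiagonal a := by
  refine ⟨hμ, ?_⟩
  convert newton_add_mem (exponent_mem_newton hv) (d := fun i => μ - v i)
    fun i => sub_nonneg.2 (hvμ i) using 1
  ext i
  simp

theorem newtonDiagonal_nonempty (hmon : IsMonomialIdeal a) (hne : a ≠ ⊥) :
    (newtonDiagonal a).Nonempty := by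
  obtain ⟨v, hv⟩ : ∃ v : Fin n →₀ ℕ, monomial v (1 : K) ∈ a := by
    by_contra! h
    refine hne ?_
    have hempty : {v : Fin n →₀ ℕ | monomial v (1 : K) ∈ a} = ∅ := eq_empty_iff_forall_notMem.2 h
    rw [hmon, hempty, image_empty, Ideal.span_empty]
  exact ⟨_, mem_newtonDiagonal_of_exponent_le hv (by positivity : (0 : ℝ) < v.degree + 1)
    fun i => by exact_mod_cast (Finsupp.le_degree i v).trans (Nat.le_succ _)⟩

end Newton

section Graded

variable {K : Type*} [Field K] {n : ℕ} {a : ℕ → Ideal (MvPolynomial (Fin n) K)}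

theorem pow_mem_of_graded (hgraded : ∀ p q : ℕ, a p * a q ≤ a (p + q)) {p : ℕ}
    {f : MvPolynomial (Fin n) K} (hf : f ∈ a p) {q : ℕ} (hq : 1 ≤ q) : f ^ q ∈ a (q * p) := by
  induction q, hq using Nat.le_induction with
  | base => simpa using hf
  | succ q _ ih =>
    rw [pow_succ, Nat.succ_mul]
    exact hgraded _ _ (Ideal.mul_mem_mul ih hf)

theorem natCast_smul_newton_subset (hgraded : ∀ p q : ℕ, a p * a q ≤ a (p + q)) (p : ℕ)
    {q : ℕ} (hq : 1 ≤ q) : (q : ℝ) • newton (a p) ⊆ newton (a (q * p)) := by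
  rw [newton, ← convexHull_smul]
  refine convexHull_min ?_ (convex_convexHull ℝ _)
  rintro _ ⟨_, ⟨v, hv, rfl⟩, rfl⟩
  have hqv : monomial (q • v) (1 : K) ∈ a (q * p) := by
    simpa [monomial_pow] using pow_mem_of_graded hgraded hv hq
  have hcast : (q : ℝ) • (fun i => (v i : ℝ)) = fun i => ((q • v) i : ℝ) := by
    ext i
    simp
  change (q : ℝ) • _ ∈ _
  rw [hcast]
  exact exponent_mem_newton hqv

variable (a) in
def asymptoticNewton : Set (Fin n → ℝ) :=
  {x | ∃ p : ℕ, 1 ≤ p ∧ (p : ℝ) • x ∈ newton (a p)}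

theorem convex_asymptoticNewton (hgraded : ∀ p q : ℕ, a p * a q ≤ a (p + q)) :
    Convex ℝ (asymptoticNewton a) := by
  rintro x ⟨p, hp, hx⟩ y ⟨q, hq, hy⟩ s t hs ht hst
  refine ⟨q * p, Nat.one_le_iff_ne_zero.2 (by positivity), ?_⟩
  have hx' : ((q * p : ℕ) : ℝ) • x ∈ newton (a (q * p)) := by
    rw [Nat.cast_mul, mul_smul]
    exact natCast_smul_newton_subset hgraded p hq (smul_mem_smul_set hx)
  have hy' : ((q * p : ℕ) : ℝ) • y ∈ newton (a (q * p)) := by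
    rw [mul_comm q p, Nat.cast_mul, mul_smul]
    exact natCast_smul_newton_subset hgraded q hp (smul_mem_smul_set hy)
  rw [smul_add, smul_comm _ s, smul_comm _ t]
  exact convex_convexHull ℝ _ hx' hy' hs ht hst

theorem asymptoticNewton_add_mem {x d : Fin n → ℝ} (hx : x ∈ asymptoticNewton a) (hd : 0 ≤ d) :
    x + d ∈ asymptoticNewton a := by
  obtain ⟨p, hp, hx⟩ := hx
  exact ⟨p, hp, by rw [smul_add]; exact newton_add_mem hx (smul_nonneg (Nat.cast_nonneg p) hd)⟩

theorem newton_asympMultiplierIdeal_subset (hgraded : ∀ p q : ℕ, a p * a q ≤ a (p + q))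
    {m : ℕ} (hm : 1 ≤ m) :
    newton (asympMultiplierIdeal a m) ⊆ (fun y => y + 1) ⁻¹' ((m : ℝ) • asymptoticNewton a) := by
  have hm0 : (m : ℝ) ≠ 0 := by positivity
  refine convexHull_min ?_ (((convex_asymptoticNewton hgraded).smul _).translate_preimage_left _)
  rintro _ ⟨u, hu, rfl⟩
  obtain ⟨s, ⟨p, hp, hs⟩, hsu⟩ :=
    mem_ideal_span_monomial_image.1 hu u (by simp)
  have hs' : (m : ℝ)⁻¹ • (fun i => (s i : ℝ) + 1) ∈ asymptoticNewton a := by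
    refine ⟨p, hp, ?_⟩
    have hp0 : (m : ℝ) / p ≠ 0 := by positivity
    have := interior_subset hs
    rwa [mem_smul_set_iff_inv_smul_mem₀ hp0, inv_div, div_eq_mul_inv, mul_smul] at this
  rw [mem_preimage, mem_smul_set_iff_inv_smul_mem₀ hm0]
  convert asymptoticNewton_add_mem hs' (d := (m : ℝ)⁻¹ • fun i => ((u - s) i : ℝ))
    (smul_nonneg (by positivity) fun i => Nat.cast_nonneg _) using 1
  ext i
  simp only [Pi.smul_apply, Pi.add_apply, Pi.one_apply, smul_eq_mul, Finsupp.coe_tsub,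
    Pi.sub_apply, Nat.cast_sub (hsu i)]
  ring

end Graded

section Threshold

variable {K : Type*} [Field K] {n : ℕ} {a : ℕ → Ideal (MvPolynomial (Fin n) K)}

theorem mem_newtonDiagonal_asympMultiplierIdeal {m p : ℕ} (hm : 1 ≤ m) (hp : 1 ≤ p) {ν μ : ℝ}
    (hν : ν ∈ newtonDiagonal (a p)) (hνμ : m / p * ν < μ) :
    μ ∈ newtonDiagonal (asympMultiplierIdeal a m) := by
  have hq : (0 : ℝ) < m / p := by positivity
  let v : Fin n →₀ ℕ := Finsupp.equivFunOnFinite.symm fun _ => ⌊μ⌋₊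
  have hvi : ∀ i, v i = ⌊μ⌋₊ := fun _ => rfl
  have hv : monomial v (1 : K) ∈ asympMultiplierIdeal a m := by
    refine Ideal.subset_span ⟨v, ⟨p, hp, ?_⟩, rfl⟩
    rw [interior_smul₀ hq.ne', mem_smul_set_iff_inv_smul_mem₀ hq.ne']
    refine pi_Ioi_subset_interior_newton hν.2 fun i _ => ?_
    simp only [mem_Ioi, Pi.smul_apply, smul_eq_mul, lt_inv_mul_iff₀ hq, hvi]
    linarith [Nat.lt_floor_add_one μ]
  exact mem_newtonDiagonal_of_exponent_le hv ((mul_pos hq hν.1).trans hνμ)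
    fun i => hvi i ▸ Nat.floor_le ((mul_pos hq hν.1).trans hνμ).le

theorem exists_mem_newtonDiagonal_of_mem_asympMultiplierIdeal
    (hgraded : ∀ p q : ℕ, a p * a q ≤ a (p + q)) {m : ℕ} (hm : 1 ≤ m) {μ : ℝ}
    (hμ : μ ∈ newtonDiagonal (asympMultiplierIdeal a m)) :
    ∃ p, 1 ≤ p ∧ (p : ℝ) / m * (μ + 1) ∈ newtonDiagonal (a p) := by
  have h := newton_asympMultiplierIdeal_subset hgraded hm hμ.2
  rw [mem_preimage, mem_smul_set_iff_inv_smul_mem₀ (by positivity)] at h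
  obtain ⟨p, hp, hpμ⟩ := h
  refine ⟨p, hp, by have := hμ.1; positivity, ?_⟩
  convert hpμ using 1
  ext i
  simp only [Pi.smul_apply, Pi.add_apply, Pi.one_apply, smul_eq_mul]
  ring

theorem sInf_newtonDiagonal_asympMultiplierIdeal_div_le {m p : ℕ} (hm : 1 ≤ m) (hp : 1 ≤ p)
    (hne : (newtonDiagonal (a p)).Nonempty) :
    sInf (newtonDiagonal (asympMultiplierIdeal a m)) / m ≤ sInf (newtonDiagonal (a p)) / p := by
  have hm0 : (0 : ℝ) < m := by positivity
  have hp0 : (0 : ℝ) < p := by positivity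
  rw [div_le_div_iff₀ hm0 hp0, ← div_le_iff₀ hm0]
  refine le_csInf hne fun ν hν => ?_
  rw [div_le_iff₀ hm0, ← le_div_iff₀ hp0]
  refine le_of_forall_gt_imp_ge_of_dense fun μ hμ => csInf_le newtonDiagonal_bddBelow ?_
  exact mem_newtonDiagonal_asympMultiplierIdeal hm hp hν (by rwa [div_mul_eq_mul_div, mul_comm])

theorem isLUB_sInf_newtonDiagonal_asympMultiplierIdeal_div
    (hgraded : ∀ p q : ℕ, a p * a q ≤ a (p + q)) (hne : ∀ p, (newtonDiagonal (a p)).Nonempty)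
    {τ : ℝ} (hτ : IsGLB ((fun p : ℕ => sInf (newtonDiagonal (a p)) / p) '' Ici 1) τ) :
    IsLUB ((fun m : ℕ => sInf (newtonDiagonal (asympMultiplierIdeal a m)) / m) '' Ici 1) τ := by
  have hτ_le (p : ℕ) (hp : 1 ≤ p) : τ ≤ sInf (newtonDiagonal (a p)) / p := hτ.1 ⟨p, hp, rfl⟩
  have hτ_ge (m : ℕ) (hm : 1 ≤ m) :
      τ ≤ (sInf (newtonDiagonal (asympMultiplierIdeal a m)) + 1) / m := by
    have hm0 : (0 : ℝ) < m := by positivity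
    rw [le_div_iff₀ hm0, ← sub_le_iff_le_add]
    refine le_csInf ⟨_, mem_newtonDiagonal_asympMultiplierIdeal hm le_rfl (hne 1).some_mem
      (lt_add_one _)⟩ fun μ hμ => ?_
    obtain ⟨p, hp, hpμ⟩ := exists_mem_newtonDiagonal_of_mem_asympMultiplierIdeal hgraded hm hμ
    have hp0 : (0 : ℝ) < p := by positivity
    have h := (hτ_le p hp).trans
      (div_le_div_of_nonneg_right (csInf_le newtonDiagonal_bddBelow hpμ) hp0.le)
    rw [show (p : ℝ) / m * (μ + 1) / p = (μ + 1) / m by field_simp, le_div_iff₀ hm0] at h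
    linarith
  refine ⟨?_, fun c hc => le_of_forall_pos_lt_add fun ε hε => ?_⟩
  · rintro _ ⟨m, hm, rfl⟩
    exact hτ.2 fun _ ⟨p, hp, h⟩ =>
      h ▸ sInf_newtonDiagonal_asympMultiplierIdeal_div_le hm hp (hne p)
  · obtain ⟨k, hk⟩ := exists_nat_one_div_lt hε
    calc τ ≤ (sInf (newtonDiagonal (asympMultiplierIdeal a (k + 1))) + 1) / (k + 1 : ℕ) :=
          hτ_ge (k + 1) (Nat.le_add_left 1 k)
      _ = sInf (newtonDiagonal (asympMultiplierIdeal a (k + 1))) / (k + 1 : ℕ) + 1 / (k + 1) := by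
          push_cast
          ring
      _ < c + ε := add_lt_add_of_le_of_lt (hc ⟨k + 1, Nat.le_add_left 1 k, rfl⟩) hk

end Threshold

theorem antitone_inv_ofReal : Antitone fun x : ℝ => (ENNReal.ofReal x)⁻¹ :=
  fun _ _ h => ENNReal.inv_le_inv.2 (ENNReal.ofReal_le_ofReal h)

theorem continuous_inv_ofReal : Continuous fun x : ℝ => (ENNReal.ofReal x)⁻¹ :=
  continuous_inv.comp ENNReal.continuous_ofReal

theorem natCast_mul_inv_ofReal {m : ℕ} (hm : 1 ≤ m) (x : ℝ) :
    (m : ℝ≥0∞) * (ENNReal.ofReal x)⁻¹ = (ENNReal.ofReal (x / m))⁻¹ := by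
  rw [ENNReal.ofReal_div_of_pos (by positivity), ENNReal.ofReal_natCast,
    ENNReal.inv_div (Or.inl (ENNReal.natCast_ne_top m)) (Or.inl (Nat.cast_ne_zero.2 (by omega))),
    div_eq_mul_inv]

theorem iSup_natCast_mul_inv_ofReal {f : ℕ → ℝ} {τ : ℝ}
    (h : IsGLB ((fun m : ℕ => f m / m) '' Ici 1) τ) :
    ⨆ m : ℕ, ⨆ (_ : 1 ≤ m), (m : ℝ≥0∞) * (ENNReal.ofReal (f m))⁻¹ = (ENNReal.ofReal τ)⁻¹ := by
  have hne : ((fun m : ℕ => f m / m) '' Ici 1).Nonempty := ⟨_, 1, self_mem_Ici, rfl⟩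
  rw [← h.csInf_eq hne, antitone_inv_ofReal.map_csInf_of_continuousAt
    continuous_inv_ofReal.continuousAt hne h.bddBelow, sSup_image, iSup_image]
  exact biSup_congr fun m hm => natCast_mul_inv_ofReal hm _

theorem iInf_natCast_mul_inv_ofReal {f : ℕ → ℝ} {τ : ℝ}
    (h : IsLUB ((fun m : ℕ => f m / m) '' Ici 1) τ) :
    ⨅ m : ℕ, ⨅ (_ : 1 ≤ m), (m : ℝ≥0∞) * (ENNReal.ofReal (f m))⁻¹ = (ENNReal.ofReal τ)⁻¹ := by
  have hne : ((fun m : ℕ => f m / m) '' Ici 1).Nonempty := ⟨_, 1, self_mem_Ici, rfl⟩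
  rw [← h.csSup_eq hne, antitone_inv_ofReal.map_csSup_of_continuousAt
    continuous_inv_ofReal.continuousAt hne h.bddAbove, sInf_image, iInf_image]
  exact biInf_congr fun m hm => natCast_mul_inv_ofReal hm _

theorem lc_gradedSeq_eq_lc_asympMultiplierIdeal_general
    {K : Type*} [Field K] {n : ℕ}
    (a : ℕ → Ideal (MvPolynomial (Fin n) K))
    (hgraded : ∀ p q : ℕ, a p * a q ≤ a (p + q))
    (hmon : ∀ m : ℕ, IsMonomialIdeal (a m))
    (hne : ∀ m : ℕ, a m ≠ ⊥)
    (b : ℕ → Ideal (MvPolynomial (Fin n) K))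
    (hb : ∀ m : ℕ, 1 ≤ m → b m = asympMultiplierIdeal a m) :
    (⨆ m : ℕ, ⨆ (_ : 1 ≤ m), (m : ℝ≥0∞) * lcMonomial (a m)) =
      (⨅ m : ℕ, ⨅ (_ : 1 ≤ m), (m : ℝ≥0∞) * lcMonomial (b m)) := by
  have hdiag (p : ℕ) : (newtonDiagonal (a p)).Nonempty :=
    newtonDiagonal_nonempty (hmon p) (hne p)
  have hglb := isGLB_csInf (⟨_, 1, self_mem_Ici, rfl⟩ :
      ((fun p : ℕ => sInf (newtonDiagonal (a p)) / p) '' Ici 1).Nonempty)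
    ⟨0, by rintro _ ⟨p, -, rfl⟩; exact div_nonneg sInf_newtonDiagonal_nonneg p.cast_nonneg⟩
  calc (⨆ m : ℕ, ⨆ (_ : 1 ≤ m), (m : ℝ≥0∞) * lcMonomial (a m))
      = _ := iSup_natCast_mul_inv_ofReal hglb
    _ = ⨅ m : ℕ, ⨅ (_ : 1 ≤ m), (m : ℝ≥0∞) * lcMonomial (asympMultiplierIdeal a m) :=
      (iInf_natCast_mul_inv_ofReal
        (isLUB_sInf_newtonDiagonal_asympMultiplierIdeal_div hgraded hdiag hglb)).symm
    _ = _ := biInf_congr fun m hm => by rw [hb m hm]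

/-- For a graded sequence `a_•` of nonzero monomial ideals with asymptotic
multiplier ideals `b_•`, one has `lc(a_•) = lc(b_•)`, i.e.
`sup_{m ≥ 1} m·lc(a_m) = inf_{m ≥ 1} m·lc(b_m)`. -/
theorem lc_gradedSeq_eq_lc_asympMultiplierIdeal
    {K : Type*} [Field K] {n : ℕ} (hn : 1 ≤ n)
    (a : ℕ → Ideal (MvPolynomial (Fin n) K))
    (hgraded : ∀ p q : ℕ, a p * a q ≤ a (p + q))
    (hmon : ∀ m : ℕ, IsMonomialIdeal (a m))
    (hne : ∀ m : ℕ, a m ≠ ⊥)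
    (b : ℕ → Ideal (MvPolynomial (Fin n) K))
    (hb : ∀ m : ℕ, 1 ≤ m → b m = asympMultiplierIdeal a m) :
    (⨆ m : ℕ, ⨆ (_ : 1 ≤ m), (m : ℝ≥0∞) * lcMonomial (a m)) =
      (⨅ m : ℕ, ⨅ (_ : 1 ≤ m), (m : ℝ≥0∞) * lcMonomial (b m)) :=
  lc_gradedSeq_eq_lc_asympMultiplierIdeal_general a hgraded hmon hne b hb
end
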